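/- arXiv:0708.3542 — 11 statements merged into one kernel-verified Lean document; each statement's English description precedes it below -/
import Mathlib

section
/- In the minority game with 2k+1 players, for any λ ∈ (0,1), the mixed strategy profile in which k players choose -1 with probability 1, k players choose +1 with probability 1, and one player chooses -1 with probability λ is a Nash equilibrium. -/
open Finset

/-- Payoff in the minority game: player `i` gets `f n` where `n` is the number of
players (including `i`) choosing the same action as `i`.
The action `true` represents `-1`, `false` represents `+1`. -/
def mgPayoff (f : ℕ → ℝ) {N : ℕ} (a : Fin N → Bool) (i : Fin N) : ℝ :=
  f ((Finset.univ.filter fun j => a j = a i).card)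

/-- Pure Nash equilibrium of the minority game. -/
def mgPureNE (f : ℕ → ℝ) {N : ℕ} (a : Fin N → Bool) : Prop :=
  ∀ i : Fin N, mgPayoff f (Function.update a i (!(a i))) i ≤ mgPayoff f a i

/-- Probability of the pure profile `a` under the mixed profile `σ`, where
`σ j` is the probability that player `j` chooses `-1` (i.e. `true`). -/
noncomputable def mgProb {N : ℕ} (σ : Fin N → ℝ) (a : Fin N → Bool) : ℝ :=
  ∏ j, if a j then σ j else 1 - σ j

/-- Expected payoff of player `i` under the mixed profile `σ`. -/
noncomputable def mgEPay (f : ℕ → ℝ) {N : ℕ} (σ : Fin N → ℝ) (i : Fin N) : ℝ :=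
  ∑ a : Fin N → Bool, mgProb σ a * f ((Finset.univ.filter fun j => a j = a i).card)

/-- Mixed Nash equilibrium of the minority game: all probabilities lie in [0,1]
and no player can strictly improve by a unilateral deviation. -/
noncomputable def mgMixedNE (f : ℕ → ℝ) {N : ℕ} (σ : Fin N → ℝ) : Prop :=
  (∀ i, 0 ≤ σ i ∧ σ i ≤ 1) ∧
    ∀ (i : Fin N) (τ : ℝ), 0 ≤ τ → τ ≤ 1 →
      mgEPay f (Function.update σ i τ) i ≤ mgEPay f σ i

/-!
Expected payoffs are affine in each player's own probability, so the profile in which one player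
mixes is the corresponding mixture of two pure profiles, one per action of the mixer. In both,
the sides have sizes `k` and `k + 1`, so a deviator only joins a group at least as large as the
one it leaves: both are pure equilibria. A deviation from the mixture is then a mixture of
deviations from pure equilibria, none of which pays.
-/

open Function

variable {N : ℕ}

def mgPure (a : Fin N → Bool) : Fin N → ℝ := fun l => if a l then 1 else 0

lemma mgProb_update (σ : Fin N → ℝ) (i : Fin N) (τ : ℝ) (a : Fin N → Bool) :
    mgProb (update σ i τ) a =
      τ * mgProb (update σ i 1) a + (1 - τ) * mgProb (update σ i 0) a := by
  have factor : ∀ x, mgProb (update σ i x) a =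
      (if a i then x else 1 - x) * ∏ l ∈ univ.erase i, if a l then σ l else 1 - σ l := by
    intro x
    rw [mgProb, ← mul_prod_erase univ _ (mem_univ i), update_self]
    congr 1
    exact prod_congr rfl fun l hl => by rw [update_of_ne (ne_of_mem_erase hl)]
  rw [factor, factor, factor]
  cases a i <;> simp only [Bool.false_eq_true, if_true, if_false] <;> ring

lemma mgEPay_update (f : ℕ → ℝ) (σ : Fin N → ℝ) (i : Fin N) (τ : ℝ) (i' : Fin N) :
    mgEPay f (update σ i τ) i' =
      τ * mgEPay f (update σ i 1) i' + (1 - τ) * mgEPay f (update σ i 0) i' := by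
  simp only [mgEPay, mul_sum, ← sum_add_distrib]
  refine sum_congr rfl fun a _ => ?_
  rw [mgProb_update]
  ring

lemma mgProb_mgPure (a a' : Fin N → Bool) :
    mgProb (mgPure a) a' = if a' = a then 1 else 0 := by
  have : ∀ l, (if a' l then mgPure a l else 1 - mgPure a l) = if a' l = a l then 1 else 0 := by
    intro l
    simp only [mgPure]
    cases a' l <;> cases a l <;> simp
  simp only [mgProb, this, funext_iff]
  convert Fintype.prod_boole

lemma mgEPay_mgPure (f : ℕ → ℝ) (a : Fin N → Bool) (i : Fin N) :
    mgEPay f (mgPure a) i = mgPayoff f a i := by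
  simp [mgEPay, mgProb_mgPure, mgPayoff]

lemma update_mgPure_one (a : Fin N → Bool) (j : Fin N) :
    update (mgPure a) j 1 = mgPure (update a j true) := by
  funext l
  by_cases hl : l = j <;> simp [mgPure, hl]

lemma update_mgPure_zero (a : Fin N → Bool) (j : Fin N) :
    update (mgPure a) j 0 = mgPure (update a j false) := by
  funext l
  by_cases hl : l = j <;> simp [mgPure, hl]

lemma mgEPay_update_mgPure_le {f : ℕ → ℝ} {a : Fin N → Bool} (ha : mgPureNE f a) (i : Fin N)
    {τ : ℝ} (hτ0 : 0 ≤ τ) (hτ1 : τ ≤ 1) :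
    mgEPay f (update (mgPure a) i τ) i ≤ mgPayoff f a i := by
  have hdev : ∀ t, mgPayoff f (update a i t) i ≤ mgPayoff f a i := by
    intro t
    by_cases ht : t = a i
    · rw [ht, update_eq_self]
    · rw [show t = !a i by cases t <;> cases h : a i <;> simp_all]
      exact ha i
  have hτ : 0 ≤ 1 - τ := by linarith
  calc mgEPay f (update (mgPure a) i τ) i
      = τ * mgPayoff f (update a i true) i + (1 - τ) * mgPayoff f (update a i false) i := by
        rw [mgEPay_update, update_mgPure_one, update_mgPure_zero, mgEPay_mgPure, mgEPay_mgPure]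
    _ ≤ τ * mgPayoff f a i + (1 - τ) * mgPayoff f a i := by gcongr <;> exact hdev _
    _ = mgPayoff f a i := by ring

theorem mgMixedNE_update_mgPure {f : ℕ → ℝ} {a : Fin N → Bool} {j : Fin N}
    (h1 : mgPureNE f (update a j true)) (h0 : mgPureNE f (update a j false))
    {p : ℝ} (hp0 : 0 ≤ p) (hp1 : p ≤ 1) :
    mgMixedNE f (update (mgPure a) j p) := by
  have hq : 0 ≤ 1 - p := by linarith
  refine ⟨fun i => ?_, fun i τ hτ0 hτ1 => ?_⟩
  · by_cases hi : i = j
    · subst hi; simp [hp0, hp1]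
    · simp only [update_of_ne hi, mgPure]; split <;> norm_num
  rw [mgEPay_update f (mgPure a) j p, update_mgPure_one, update_mgPure_zero, mgEPay_mgPure,
    mgEPay_mgPure]
  by_cases hi : i = j
  · subst hi
    rw [update_idem]
    -- a deviation of the mixer is a deviation from each of the two pure equilibria
    have hle : ∀ t, mgEPay f (update (mgPure a) i τ) i ≤ mgPayoff f (update a i t) i := by
      rintro (_ | _)
      · simpa only [← update_mgPure_zero, update_idem] using
          mgEPay_update_mgPure_le h0 i hτ0 hτ1
      · simpa only [← update_mgPure_one, update_idem] using
          mgEPay_update_mgPure_le h1 i hτ0 hτ1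
    linarith [mul_le_mul_of_nonneg_left (hle true) hp0, mul_le_mul_of_nonneg_left (hle false) hq]
  · rw [update_comm (Ne.symm hi), mgEPay_update f _ j p, update_comm hi, update_comm hi,
      update_mgPure_one, update_mgPure_zero]
    gcongr
    · exact mgEPay_update_mgPure_le h1 i hτ0 hτ1
    · exact mgEPay_update_mgPure_le h0 i hτ0 hτ1

lemma mgPayoff_update_not (f : ℕ → ℝ) (a : Fin N → Bool) (i : Fin N) :
    mgPayoff f (update a i (!a i)) i = f (#{l | a l ≠ a i} + 1) := by
  rw [mgPayoff, update_self, ← card_insert_of_notMem (a := i) (s := {l | a l ≠ a i}) (by simp)]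
  congr 2
  ext l
  by_cases hl : l = i <;> cases a l <;> cases a i <;> simp [update_apply, hl]

/-- A deviator moves into a group of size `#{l | a l ≠ a i} + 1`, at least its current one. -/
lemma mgPureNE_of_forall_two_mul_card_le {f : ℕ → ℝ} (hf : AntitoneOn f (Set.Icc 1 N))
    (a : Fin N → Bool) (ha : ∀ i, 2 * #{l | a l = a i} ≤ N + 1) : mgPureNE f a := by
  intro i
  have hsum : #{l | a l = a i} + #{l | a l ≠ a i} = N := by
    simpa using card_filter_add_card_filter_not (s := univ) (fun l => a l = a i)
  have hpos : 0 < #{l | a l = a i} := card_pos.2 ⟨i, by simp⟩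
  have := ha i
  rw [mgPayoff_update_not]
  exact hf ⟨by omega, by omega⟩ ⟨by omega, by omega⟩ (by omega)

lemma mgPureNE_of_card_eq {k : ℕ} {f : ℕ → ℝ} (hf : AntitoneOn f (Set.Icc 1 (2 * k + 1)))
    (a : Fin (2 * k + 1) → Bool) (ha : #{l | a l = true} = k ∨ #{l | a l = true} = k + 1) :
    mgPureNE f a := by
  refine mgPureNE_of_forall_two_mul_card_le hf a fun i => ?_
  have hsum : #{l | a l = true} + #{l | a l = false} = 2 * k + 1 := by
    simpa using card_filter_add_card_filter_not (s := univ) (fun l => a l = true)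
  cases a i <;> omega

lemma card_filter_update_true {a : Fin N → Bool} {j : Fin N} (haj : a j = false) :
    #{l | update a j true l = true} = #{l | a l = true} + 1 := by
  have : univ.filter (fun l => update a j true l = true) =
      insert j (univ.filter fun l => a l = true) := by
    ext l
    by_cases hl : l = j <;> simp [update_apply, hl]
  rw [this, card_insert_of_notMem (by simp [haj])]

/-- For any λ ∈ (0,1), the profile where k players choose -1, k players choose +1,
and one player mixes with probability λ on -1 is a Nash equilibrium. -/
theorem stmt_6 (k : ℕ) (f : ℕ → ℝ) (hf : StrictAntiOn f (Set.Icc 1 (2 * k + 1)))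
    (lam : ℝ) (hlam : lam ∈ Set.Ioo (0:ℝ) 1)
    (σ : Fin (2 * k + 1) → ℝ) (j : Fin (2 * k + 1))
    (hj : σ j = lam)
    (hpure : ∀ i, i ≠ j → σ i = 0 ∨ σ i = 1)
    (hcard : (Finset.univ.filter fun i => σ i = 1).card = k) :
    mgMixedNE f σ := by
  set a : Fin (2 * k + 1) → Bool := fun l => decide (σ l = 1)
  have hσ : σ = update (mgPure a) j lam := by
    funext l
    by_cases hl : l = j
    · subst hl; simp [hj]
    · rcases hpure l hl with h | h <;> simp [update_of_ne hl, mgPure, a, h]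
  have haj : a j = false := by simp [a, hj, hlam.2.ne]
  have hcard_a : #{l | a l = true} = k := by simpa [a] using hcard
  have hcard_true : #{l | update a j true l = true} = k + 1 := by
    rw [card_filter_update_true haj, hcard_a]
  have hcard_false : #{l | update a j false l = true} = k := by
    rwa [← haj, update_eq_self]
  rw [hσ]
  exact mgMixedNE_update_mgPure (mgPureNE_of_card_eq hf.antitoneOn _ (Or.inr hcard_true))
    (mgPureNE_of_card_eq hf.antitoneOn _ (Or.inl hcard_false)) hlam.1.le hlam.2.le
end

section
/- In the minority game with 2k+1 players, if a Nash equilibrium has exactly one mixer (one player with a strictly mixed strategy and 2k players using pure strategies), then exactly k of the pure-strategy players choose -1 and exactly k choose +1. -/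
open Finset

lemma mgEPay_key (f : ℕ → ℝ) {N : ℕ} (σ : Fin N → ℝ) (j : Fin N)
    (hpure : ∀ i, i ≠ j → σ i = 0 ∨ σ i = 1) :
    mgEPay f σ j =
      σ j * f ((Finset.univ.filter fun i => i ≠ j ∧ σ i = 1).card + 1)
      + (1 - σ j) * f ((Finset.univ.filter fun i => i ≠ j ∧ σ i = 0).card + 1) := by
  classical
  set at_ : Fin N → Bool := fun i => if i = j then true else decide (σ i = 1) with hat
  set af : Fin N → Bool := fun i => if i = j then false else decide (σ i = 1) with haf
  have hne : at_ ≠ af := by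
    intro h
    have := congrFun h j
    simp [hat, haf] at this
  have hzero : ∀ a : Fin N → Bool, a ∉ ({at_, af} : Finset (Fin N → Bool)) →
      mgProb σ a = 0 := by
    intro a ha
    have hex : ∃ i, i ≠ j ∧ a i ≠ decide (σ i = 1) := by
      by_contra h
      push_neg at h
      apply ha
      simp only [mem_insert, mem_singleton]
      cases haj : a j
      · right
        funext i
        by_cases hij : i = j
        · simp [haf, hij, haj]
        · simp [haf, hij, h i hij]
      · left
        funext i
        by_cases hij : i = j
        · simp [hat, hij, haj]
        · simp [hat, hij, h i hij]
    obtain ⟨i, hij, hi⟩ := hex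
    rcases hpure i hij with h0 | h1
    · have hai : a i = true := by
        simp [h0] at hi
        simpa using hi
      exact Finset.prod_eq_zero (Finset.mem_univ i) (by simp [hai, h0])
    · have hai : a i = false := by
        simp [h1] at hi
        simpa using hi
      exact Finset.prod_eq_zero (Finset.mem_univ i) (by simp [hai, h1])
  have hsum := Finset.sum_subset (Finset.subset_univ ({at_, af} : Finset (Fin N → Bool)))
    (fun a _ ha => by
      simp [hzero a ha])
    (f := fun a => mgProb σ a * f ((Finset.univ.filter fun i => a i = a j).card))
  rw [mgEPay, ← hsum, Finset.sum_pair hne]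
  have hprob_t : mgProb σ at_ = σ j := by
    rw [mgProb, Finset.prod_eq_single j]
    · simp [hat]
    · intro b _ hb
      rcases hpure b hb with h0 | h0 <;> simp [hat, hb, h0]
    · simp
  have hprob_f : mgProb σ af = 1 - σ j := by
    rw [mgProb, Finset.prod_eq_single j]
    · simp [haf]
    · intro b _ hb
      rcases hpure b hb with h0 | h0 <;> simp [haf, hb, h0]
    · simp
  have hcard_t : (Finset.univ.filter fun i => at_ i = at_ j).card
      = (Finset.univ.filter fun i => i ≠ j ∧ σ i = 1).card + 1 := by
    have hset : (Finset.univ.filter fun i => at_ i = at_ j)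
        = insert j (Finset.univ.filter fun i => i ≠ j ∧ σ i = 1) := by
      ext i
      by_cases hij : i = j <;> simp [hat, hij]
    rw [hset, Finset.card_insert_of_notMem (by simp)]
  have hcard_f : (Finset.univ.filter fun i => af i = af j).card
      = (Finset.univ.filter fun i => i ≠ j ∧ σ i = 0).card + 1 := by
    have hset : (Finset.univ.filter fun i => af i = af j)
        = insert j (Finset.univ.filter fun i => i ≠ j ∧ σ i = 0) := by
      ext i
      by_cases hij : i = j
      · simp [haf, hij]
      · rcases hpure i hij with h0 | h0 <;> simp [haf, hij, h0]
    rw [hset, Finset.card_insert_of_notMem (by simp)]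
  rw [hprob_t, hprob_f, hcard_t, hcard_f]

/-- In a Nash equilibrium of the minority game with exactly one mixer, exactly k
of the pure players choose -1 and exactly k choose +1. -/
theorem stmt_7 (k : ℕ) (f : ℕ → ℝ) (hf : StrictAntiOn f (Set.Icc 1 (2 * k + 1)))
    (σ : Fin (2 * k + 1) → ℝ) (hNE : mgMixedNE f σ)
    (j : Fin (2 * k + 1)) (hj : 0 < σ j ∧ σ j < 1)
    (hpure : ∀ i, i ≠ j → σ i = 0 ∨ σ i = 1) :
    (Finset.univ.filter fun i => σ i = 1).card = k ∧
      (Finset.univ.filter fun i => σ i = 0).card = k := by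
  classical
  set M := (Finset.univ.filter fun i => i ≠ j ∧ σ i = 1).card with hM
  set P := (Finset.univ.filter fun i => i ≠ j ∧ σ i = 0).card with hP
  -- the two filter sets partition univ.erase j
  have hMP : M + P = 2 * k := by
    have hunion : (Finset.univ.filter fun i => i ≠ j ∧ σ i = 1) ∪
        (Finset.univ.filter fun i => i ≠ j ∧ σ i = 0) = Finset.univ.erase j := by
      ext i
      by_cases hij : i = j
      · simp [hij]
      · rcases hpure i hij with h0 | h0 <;> simp [hij, h0]
    have hdisj : Disjoint (Finset.univ.filter fun i => i ≠ j ∧ σ i = 1)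
        (Finset.univ.filter fun i => i ≠ j ∧ σ i = 0) := by
      rw [Finset.disjoint_left]
      intro i hi hi'
      simp only [Finset.mem_filter] at hi hi'
      have ha := hi.2.2
      have hb := hi'.2.2
      rw [ha] at hb
      norm_num at hb
    have := Finset.card_union_of_disjoint hdisj
    rw [hunion, Finset.card_erase_of_mem (Finset.mem_univ j), Finset.card_univ] at this
    simp only [Fintype.card_fin] at this
    omega
  -- apply the key lemma to σ and to the deviations τ = 0, 1
  have hEσ := mgEPay_key f σ j hpure
  have hkey : ∀ τ : ℝ, mgEPay f (Function.update σ j τ) j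
      = τ * f (M + 1) + (1 - τ) * f (P + 1) := by
    intro τ
    have hpure' : ∀ i, i ≠ j → Function.update σ j τ i = 0 ∨ Function.update σ j τ i = 1 := by
      intro i hij
      rw [Function.update_of_ne hij]
      exact hpure i hij
    have h := mgEPay_key f (Function.update σ j τ) j hpure'
    have hf1 : (Finset.univ.filter fun i => i ≠ j ∧ Function.update σ j τ i = 1)
        = Finset.univ.filter fun i => i ≠ j ∧ σ i = 1 := by
      apply Finset.filter_congr
      intro i _
      by_cases hij : i = j <;> simp [hij, Function.update_of_ne]
    have hf0 : (Finset.univ.filter fun i => i ≠ j ∧ Function.update σ j τ i = 0)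
        = Finset.univ.filter fun i => i ≠ j ∧ σ i = 0 := by
      apply Finset.filter_congr
      intro i _
      by_cases hij : i = j <;> simp [hij, Function.update_of_ne]
    rw [h, hf1, hf0, Function.update_self, ← hM, ← hP]
  have h1 := hNE.2 j 1 zero_le_one le_rfl
  have h0 := hNE.2 j 0 le_rfl zero_le_one
  rw [hkey 1, hEσ] at h1
  rw [hkey 0, hEσ] at h0
  rw [← hM, ← hP] at h1 h0
  -- indifference: f (M+1) = f (P+1)
  have hAB : f (M + 1) = f (P + 1) := by nlinarith [hj.1, hj.2]
  have hMeqP : M = P := by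
    have hMmem : (M + 1 : ℕ) ∈ Set.Icc 1 (2 * k + 1) := by
      constructor <;> omega
    have hPmem : (P + 1 : ℕ) ∈ Set.Icc 1 (2 * k + 1) := by
      constructor <;> omega
    have := hf.injOn hMmem hPmem hAB
    omega
  have hMk : M = k := by omega
  have hPk : P = k := by omega
  have e1 : (Finset.univ.filter fun i => σ i = 1)
      = Finset.univ.filter fun i => i ≠ j ∧ σ i = 1 := by
    ext i
    simp only [Finset.mem_filter, Finset.mem_univ, true_and]
    constructor
    · intro h
      refine ⟨?_, h⟩
      rintro rfl
      exact absurd h (by linarith [hj.2])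
    · exact fun h => h.2
  have e0 : (Finset.univ.filter fun i => σ i = 0)
      = Finset.univ.filter fun i => i ≠ j ∧ σ i = 0 := by
    ext i
    simp only [Finset.mem_filter, Finset.mem_univ, true_and]
    constructor
    · intro h
      refine ⟨?_, h⟩
      rintro rfl
      exact absurd h (by linarith [hj.1])
    · exact fun h => h.2
  rw [e1, e0]
  exact ⟨hMk, hPk⟩
end

section
/- Consider a strategy profile of type (ℓ, r, λ) in the minority game with 2k+1 players: ℓ players choose -1, r players choose +1, and the remaining m = 2k+1-ℓ-r ≥ 1 players each choose -1 with probability λ ∈ (0,1). This profile is a Nash equilibrium if and only if v₋(ℓ+1, r, λ) = v₊(ℓ, r+1, λ), where v₋(ℓ+1,r,λ) = ∑_{s=0}^{m-1} C(m-1,s) λ^s (1-λ)^{m-1-s} f(ℓ+1+s) and v₊(ℓ,r+1,λ) = ∑_{s=0}^{m-1} C(m-1,s) λ^s (1-λ)^{m-1-s} f(r+m-s). -/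
open Finset

lemma binsum {α : Type*} [DecidableEq α] (M : Finset α) (x y : ℝ) (h : ℕ → ℝ) :
    ∑ S ∈ M.powerset, x ^ S.card * y ^ (M.card - S.card) * h S.card
      = ∑ s ∈ Finset.range (M.card + 1),
          (M.card.choose s : ℝ) * x ^ s * y ^ (M.card - s) * h s := by
  rw [Finset.sum_powerset]
  refine Finset.sum_congr rfl fun s hs => ?_
  rw [Finset.sum_congr rfl (fun S hS => by
        rw [(Finset.mem_powersetCard.1 hS).2] :
      ∀ S ∈ M.powersetCard s, x ^ S.card * y ^ (M.card - S.card) * h S.card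
        = x ^ s * y ^ (M.card - s) * h s),
    Finset.sum_const, Finset.card_powersetCard, nsmul_eq_mul]
  ring

lemma pascal (n : ℕ) (x y : ℝ) (g : ℕ → ℝ) :
    ∑ t ∈ Finset.range (n + 2), ((n + 1).choose t : ℝ) * x ^ t * y ^ (n + 1 - t) * g t
      = y * ∑ t ∈ Finset.range (n + 1), (n.choose t : ℝ) * x ^ t * y ^ (n - t) * g t
        + x * ∑ t ∈ Finset.range (n + 1), (n.choose t : ℝ) * x ^ t * y ^ (n - t) * g (t + 1) := by
  rw [Finset.sum_range_succ']
  have hysum : y * ∑ t ∈ Finset.range (n + 1), (n.choose t : ℝ) * x ^ t * y ^ (n - t) * g t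
      = (∑ t ∈ Finset.range (n + 1), (n.choose (t+1) : ℝ) * x ^ (t+1) * y ^ (n - t) * g (t+1))
        + y ^ (n + 1) * g 0 := by
    rw [Finset.mul_sum, Finset.sum_range_succ', Finset.sum_range_succ,
      Nat.choose_succ_self]
    push_cast
    rw [Finset.sum_congr rfl (fun t ht => by
        have h2 : n - t = (n - (t+1)) + 1 := by
          have := Finset.mem_range.1 ht; omega
        rw [h2, pow_succ]; ring :
      ∀ t ∈ Finset.range n, y * ((n.choose (t+1) : ℝ) * x ^ (t+1) * y ^ (n - (t+1)) * g (t+1))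
        = (n.choose (t+1) : ℝ) * x ^ (t+1) * y ^ (n - t) * g (t+1))]
    simp
    ring
  rw [hysum, Finset.mul_sum]
  have hterm : ∀ t ∈ Finset.range (n+1),
      ((n+1).choose (t+1) : ℝ) * x ^ (t+1) * y ^ (n + 1 - (t+1)) * g (t+1)
        = x * ((n.choose t : ℝ) * x ^ t * y ^ (n - t) * g (t+1))
          + (n.choose (t+1) : ℝ) * x ^ (t+1) * y ^ (n - t) * g (t+1) := by
    intro t ht
    have h1 : n + 1 - (t + 1) = n - t := by omega
    rw [h1, Nat.choose_succ_succ]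
    push_cast
    ring
  rw [Finset.sum_congr rfl hterm, Finset.sum_add_distrib]
  have h0 : ((n+1).choose 0 : ℝ) * x ^ 0 * y ^ (n + 1 - 0) * g 0 = y ^ (n+1) * g 0 := by
    simp
  rw [h0]
  ring

variable {N : ℕ}

def boolEquiv (N : ℕ) : Finset (Fin N) ≃ (Fin N → Bool) where
  toFun T := fun j => decide (j ∈ T)
  invFun a := Finset.univ.filter fun j => a j = true
  left_inv T := by ext j; simp
  right_inv a := by funext j; by_cases h : a j = true <;> simp [h]

lemma prod_ite_split (σ : Fin N → ℝ) (T : Finset (Fin N)) :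
    (∏ j, if j ∈ T then σ j else 1 - σ j)
      = (∏ j ∈ T, σ j) * ∏ j ∈ Finset.univ \ T, (1 - σ j) := by
  rw [Finset.prod_ite]
  congr 1
  · congr 1; ext j; simp
  · congr 1; ext j; simp

lemma split_i (i : Fin N) (F : Finset (Fin N) → ℝ) :
    ∑ T : Finset (Fin N), F T
      = ∑ T ∈ (Finset.univ.erase i).powerset, F T
        + ∑ T ∈ (Finset.univ.erase i).powerset, F (insert i T) := by
  conv_lhs => rw [← Finset.powerset_univ, ← Finset.insert_erase (Finset.mem_univ i)]
  rw [Finset.sum_powerset_insert (Finset.notMem_erase i Finset.univ)]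

lemma peel (σ : Fin N → ℝ) (lam : ℝ) (O Z M u : Finset (Fin N))
    (hOZ : Disjoint O Z) (hOM : Disjoint O M) (hZM : Disjoint Z M)
    (hu : O ∪ Z ∪ M = u)
    (h1 : ∀ j ∈ O, σ j = 1) (h0 : ∀ j ∈ Z, σ j = 0) (hm : ∀ j ∈ M, σ j = lam)
    (g : ℕ → ℝ) :
    ∑ T ∈ u.powerset, (∏ j ∈ T, σ j) * (∏ j ∈ u \ T, (1 - σ j)) * g T.card
      = ∑ s ∈ Finset.range (M.card + 1),
          (M.card.choose s : ℝ) * lam ^ s * (1 - lam) ^ (M.card - s) * g (O.card + s) := by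
  have hbin := binsum M lam (1 - lam) (fun n => g (O.card + n))
  rw [← hbin]
  have hvan : ∀ T ∈ u.powerset,
      (∏ j ∈ T, σ j) * (∏ j ∈ u \ T, (1 - σ j)) * g T.card ≠ 0 →
        O ⊆ T ∧ Disjoint T Z := by
    intro T hT hne
    constructor
    · by_contra hOT
      obtain ⟨j, hjO, hjT⟩ := Finset.not_subset.1 hOT
      have hju : j ∈ u \ T := by
        refine Finset.mem_sdiff.2 ⟨?_, hjT⟩
        rw [← hu]; exact Finset.mem_union_left _ (Finset.mem_union_left _ hjO)
      have : (∏ j ∈ u \ T, (1 - σ j)) = 0 :=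
        Finset.prod_eq_zero hju (by rw [h1 j hjO]; ring)
      exact hne (by rw [this]; ring)
    · by_contra hTZ
      obtain ⟨j, hjT, hjZ⟩ := Finset.not_disjoint_iff.1 hTZ
      have : (∏ j ∈ T, σ j) = 0 := Finset.prod_eq_zero hjT (h0 j hjZ)
      exact hne (by rw [this]; ring)
  rw [← Finset.sum_filter_of_ne hvan]
  refine Finset.sum_nbij' (fun T => T ∩ M) (fun S => O ∪ S) ?_ ?_ ?_ ?_ ?_
  · intro T hT
    exact Finset.mem_powerset.2 Finset.inter_subset_right
  · intro S hS
    have hSM : S ⊆ M := Finset.mem_powerset.1 hS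
    refine Finset.mem_filter.2 ⟨Finset.mem_powerset.2 ?_, Finset.subset_union_left, ?_⟩
    · rw [← hu]
      exact Finset.union_subset
        (Finset.subset_union_left.trans Finset.subset_union_left)
        (hSM.trans Finset.subset_union_right)
    · exact Finset.disjoint_union_left.2 ⟨hOZ, (Finset.disjoint_of_subset_left hSM hZM.symm)⟩
  · intro T hT
    obtain ⟨hTp, hOT, hTZ⟩ := Finset.mem_filter.1 hT
    have hTu : T ⊆ u := Finset.mem_powerset.1 hTp
    ext j
    simp only [Finset.mem_union, Finset.mem_inter]
    constructor
    · rintro (hj | ⟨hj, _⟩)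
      · exact hOT hj
      · exact hj
    · intro hjT
      have : j ∈ O ∪ Z ∪ M := by rw [hu]; exact hTu hjT
      rcases Finset.mem_union.1 this with h' | h'
      · rcases Finset.mem_union.1 h' with h'' | h''
        · exact Or.inl h''
        · exact absurd hjT (Finset.disjoint_right.1 hTZ h'')
      · exact Or.inr ⟨hjT, h'⟩
  · intro S hS
    have hSM : S ⊆ M := Finset.mem_powerset.1 hS
    show (O ∪ S) ∩ M = S
    rw [Finset.union_inter_distrib_right, Finset.inter_eq_left.2 hSM,
      (Finset.disjoint_iff_inter_eq_empty.1 hOM), Finset.empty_union]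
  · intro T hT
    obtain ⟨hTp, hOT, hTZ⟩ := Finset.mem_filter.1 hT
    have hTu : T ⊆ u := Finset.mem_powerset.1 hTp
    have hTeq : T = O ∪ (T ∩ M) := by
      ext j
      simp only [Finset.mem_union, Finset.mem_inter]
      constructor
      · intro hjT
        have : j ∈ O ∪ Z ∪ M := by rw [hu]; exact hTu hjT
        rcases Finset.mem_union.1 this with h' | h'
        · rcases Finset.mem_union.1 h' with h'' | h''
          · exact Or.inl h''
          · exact absurd hjT (Finset.disjoint_right.1 hTZ h'')
        · exact Or.inr ⟨hjT, h'⟩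
      · rintro (hj | ⟨hj, _⟩)
        · exact hOT hj
        · exact hj
    have hdisjO : Disjoint O (T ∩ M) :=
      Finset.disjoint_of_subset_right Finset.inter_subset_right hOM
    have hcard : T.card = O.card + (T ∩ M).card := by
      conv_lhs => rw [hTeq]
      rw [Finset.card_union_of_disjoint hdisjO]
    have hprod1 : (∏ j ∈ T, σ j) = lam ^ (T ∩ M).card := by
      conv_lhs => rw [hTeq]
      rw [Finset.prod_union hdisjO, Finset.prod_congr rfl (fun j hj => h1 j hj),
        Finset.prod_const_one, one_mul,
        Finset.prod_congr rfl (fun j hj => hm j (Finset.mem_of_mem_inter_right hj)),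
        Finset.prod_const]
    have husdiff : u \ T = Z ∪ (M \ (T ∩ M)) := by
      ext j
      simp only [Finset.mem_sdiff, Finset.mem_union, Finset.mem_inter, not_and]
      constructor
      · rintro ⟨hju, hjT⟩
        rw [← hu] at hju
        rcases Finset.mem_union.1 hju with h' | h'
        · rcases Finset.mem_union.1 h' with h'' | h''
          · exact absurd (hOT h'') hjT
          · exact Or.inl h''
        · exact Or.inr ⟨h', fun h => absurd h hjT⟩
      · rintro (hj | ⟨hj, hj2⟩)
        · refine ⟨by rw [← hu]; exact Finset.mem_union_left _ (Finset.mem_union_right _ hj), ?_⟩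
          exact fun h => absurd h (Finset.disjoint_right.1 hTZ hj)
        · refine ⟨by rw [← hu]; exact Finset.mem_union_right _ hj, fun h => hj2 h hj⟩
    have hdisjZ : Disjoint Z (M \ (T ∩ M)) :=
      Finset.disjoint_of_subset_right (Finset.sdiff_subset) hZM
    have hprod2 : (∏ j ∈ u \ T, (1 - σ j)) = (1 - lam) ^ (M.card - (T ∩ M).card) := by
      rw [husdiff, Finset.prod_union hdisjZ,
        Finset.prod_congr rfl (fun j hj => by rw [h0 j hj, sub_zero] : ∀ j ∈ Z, (1 - σ j) = 1),
        Finset.prod_const_one, one_mul,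
        Finset.prod_congr rfl
          (fun j hj => by rw [hm j (Finset.mem_sdiff.1 hj).1] :
            ∀ j ∈ M \ (T ∩ M), (1 - σ j) = 1 - lam),
        Finset.prod_const, Finset.card_sdiff_of_subset Finset.inter_subset_right]
    rw [hprod1, hprod2, hcard]

lemma epay_formula (f : ℕ → ℝ) (lam : ℝ) (σ : Fin N → ℝ) (i : Fin N)
    (O Z M : Finset (Fin N))
    (hOZ : Disjoint O Z) (hOM : Disjoint O M) (hZM : Disjoint Z M)
    (hu : O ∪ Z ∪ M = Finset.univ.erase i)
    (h1 : ∀ j ∈ O, σ j = 1) (h0 : ∀ j ∈ Z, σ j = 0) (hm : ∀ j ∈ M, σ j = lam) :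
    mgEPay f σ i
      = σ i * ∑ s ∈ Finset.range (M.card + 1),
          (M.card.choose s : ℝ) * lam ^ s * (1 - lam) ^ (M.card - s) * f (O.card + 1 + s)
      + (1 - σ i) * ∑ s ∈ Finset.range (M.card + 1),
          (M.card.choose s : ℝ) * lam ^ s * (1 - lam) ^ (M.card - s)
            * f (Z.card + 1 + (M.card - s)) := by
  have hNpos : 1 ≤ N := i.pos
  have hNcard : O.card + Z.card + M.card + 1 = N := by
    have hd : Disjoint (O ∪ Z) M := Finset.disjoint_union_left.2 ⟨hOM, hZM⟩
    have := congrArg Finset.card hu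
    rw [Finset.card_union_of_disjoint hd, Finset.card_union_of_disjoint hOZ,
      Finset.card_erase_of_mem (Finset.mem_univ i), Finset.card_univ, Fintype.card_fin] at this
    omega
  unfold mgEPay mgProb
  rw [← Equiv.sum_comp (boolEquiv N)
    (fun a => (∏ j, if a j then σ j else 1 - σ j)
      * f ((Finset.univ.filter fun j => a j = a i).card))]
  simp only [boolEquiv, Equiv.coe_fn_mk, decide_eq_true_eq, decide_eq_decide]
  rw [split_i i]
  have hs1 : ∀ T ∈ (Finset.univ.erase i).powerset,
      (∏ j, if j ∈ T then σ j else 1 - σ j)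
        * f ((Finset.univ.filter fun j => (j ∈ T ↔ i ∈ T)).card)
      = (∏ j ∈ T, σ j) * (∏ j ∈ Finset.univ.erase i \ T, (1 - σ j))
          * ((1 - σ i) * f (N - T.card)) := by
    intro T hT
    have hTu : T ⊆ Finset.univ.erase i := Finset.mem_powerset.1 hT
    have hiT : i ∉ T := fun h => Finset.notMem_erase i _ (hTu h)
    have hcnt : (Finset.univ.filter fun j => (j ∈ T ↔ i ∈ T)).card = N - T.card := by
      have : (Finset.univ.filter fun j => (j ∈ T ↔ i ∈ T)) = Finset.univ \ T := by
        ext j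
        simp [hiT]
      rw [this, Finset.card_univ_diff, Fintype.card_fin]
    have hsplit : Finset.univ \ T = insert i (Finset.univ.erase i \ T) := by
      ext j
      by_cases hj : j = i <;> simp [hj, hiT]
    rw [hcnt, prod_ite_split, hsplit,
      Finset.prod_insert (fun h => Finset.notMem_erase i _ (Finset.mem_sdiff.1 h).1)]
    ring
  have hs2 : ∀ T ∈ (Finset.univ.erase i).powerset,
      (∏ j, if j ∈ insert i T then σ j else 1 - σ j)
        * f ((Finset.univ.filter fun j => (j ∈ insert i T ↔ i ∈ insert i T)).card)
      = (∏ j ∈ T, σ j) * (∏ j ∈ Finset.univ.erase i \ T, (1 - σ j))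
          * (σ i * f (T.card + 1)) := by
    intro T hT
    have hTu : T ⊆ Finset.univ.erase i := Finset.mem_powerset.1 hT
    have hiT : i ∉ T := fun h => Finset.notMem_erase i _ (hTu h)
    have hcnt : (Finset.univ.filter fun j => (j ∈ insert i T ↔ i ∈ insert i T)).card
        = T.card + 1 := by
      have : (Finset.univ.filter fun j => (j ∈ insert i T ↔ i ∈ insert i T))
          = insert i T := by
        ext j
        simp
      rw [this, Finset.card_insert_of_notMem hiT]
    have hsplit : Finset.univ \ insert i T = Finset.univ.erase i \ T := by
      ext j
      by_cases hj : j = i <;> simp [hj]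
    rw [hcnt, prod_ite_split, hsplit, Finset.prod_insert hiT]
    ring
  rw [Finset.sum_congr rfl hs1, Finset.sum_congr rfl hs2,
    peel σ lam O Z M _ hOZ hOM hZM hu h1 h0 hm (fun n => (1 - σ i) * f (N - n)),
    peel σ lam O Z M _ hOZ hOM hZM hu h1 h0 hm (fun n => σ i * f (n + 1))]
  have e1 : ∀ s ∈ Finset.range (M.card + 1),
      (M.card.choose s : ℝ) * lam ^ s * (1 - lam) ^ (M.card - s)
          * ((1 - σ i) * f (N - (O.card + s)))
        = (1 - σ i) * ((M.card.choose s : ℝ) * lam ^ s * (1 - lam) ^ (M.card - s)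
            * f (Z.card + 1 + (M.card - s))) := by
    intro s hs
    have : N - (O.card + s) = Z.card + 1 + (M.card - s) := by
      have := Finset.mem_range.1 hs; omega
    rw [this]; ring
  have e2 : ∀ s ∈ Finset.range (M.card + 1),
      (M.card.choose s : ℝ) * lam ^ s * (1 - lam) ^ (M.card - s)
          * (σ i * f (O.card + s + 1))
        = σ i * ((M.card.choose s : ℝ) * lam ^ s * (1 - lam) ^ (M.card - s)
            * f (O.card + 1 + s)) := by
    intro s hs
    have : O.card + s + 1 = O.card + 1 + s := by omega
    rw [this]; ring
  rw [Finset.sum_congr rfl e1, Finset.sum_congr rfl e2, ← Finset.mul_sum, ← Finset.mul_sum]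
  ring

lemma epay_update_formula (f : ℕ → ℝ) (lam : ℝ) (σ : Fin N → ℝ) (i : Fin N) (τ : ℝ)
    (O Z M : Finset (Fin N))
    (hOZ : Disjoint O Z) (hOM : Disjoint O M) (hZM : Disjoint Z M)
    (hu : O ∪ Z ∪ M = Finset.univ.erase i)
    (h1 : ∀ j ∈ O, σ j = 1) (h0 : ∀ j ∈ Z, σ j = 0) (hm : ∀ j ∈ M, σ j = lam) :
    mgEPay f (Function.update σ i τ) i
      = τ * ∑ s ∈ Finset.range (M.card + 1),
          (M.card.choose s : ℝ) * lam ^ s * (1 - lam) ^ (M.card - s) * f (O.card + 1 + s)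
      + (1 - τ) * ∑ s ∈ Finset.range (M.card + 1),
          (M.card.choose s : ℝ) * lam ^ s * (1 - lam) ^ (M.card - s)
            * f (Z.card + 1 + (M.card - s)) := by
  have hne : ∀ P : Finset (Fin N), P ⊆ O ∪ Z ∪ M → ∀ j ∈ P, j ≠ i := by
    intro P hP j hj
    have := hP hj
    rw [hu] at this
    exact (Finset.mem_erase.1 this).1
  have hO : O ⊆ O ∪ Z ∪ M := Finset.subset_union_left.trans Finset.subset_union_left
  have hZ : Z ⊆ O ∪ Z ∪ M := Finset.subset_union_right.trans Finset.subset_union_left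
  have hM : M ⊆ O ∪ Z ∪ M := Finset.subset_union_right
  rw [epay_formula f lam (Function.update σ i τ) i O Z M hOZ hOM hZM hu
    (fun j hj => by rw [Function.update_of_ne (hne O hO j hj)]; exact h1 j hj)
    (fun j hj => by rw [Function.update_of_ne (hne Z hZ j hj)]; exact h0 j hj)
    (fun j hj => by rw [Function.update_of_ne (hne M hM j hj)]; exact hm j hj),
    Function.update_self]

set_option maxHeartbeats 1600000 in
/-- Characterization of equilibria of type (ℓ, r, λ): such a profile (with at
least one mixer) is a Nash equilibrium iff the mixers' indifference condition
v₋(ℓ+1,r,λ) = v₊(ℓ,r+1,λ) holds. -/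
theorem stmt_8 (k : ℕ) (f : ℕ → ℝ) (hf : StrictAntiOn f (Set.Icc 1 (2 * k + 1)))
    (l r : ℕ) (hlr : l + r ≤ 2 * k) (lam : ℝ) (hlam : lam ∈ Set.Ioo (0:ℝ) 1)
    (σ : Fin (2 * k + 1) → ℝ)
    (hσ : ∀ i, σ i = 1 ∨ σ i = 0 ∨ σ i = lam)
    (hl : (Finset.univ.filter fun i => σ i = 1).card = l)
    (hr : (Finset.univ.filter fun i => σ i = 0).card = r) :
    mgMixedNE f σ ↔
      (∑ s ∈ Finset.range (2 * k + 1 - l - r),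
        ((2 * k - l - r).choose s : ℝ) * lam ^ s * (1 - lam) ^ (2 * k - l - r - s)
          * f (l + 1 + s)) =
      ∑ s ∈ Finset.range (2 * k + 1 - l - r),
        ((2 * k - l - r).choose s : ℝ) * lam ^ s * (1 - lam) ^ (2 * k - l - r - s)
          * f (r + (2 * k + 1 - l - r) - s) := by
  obtain ⟨hlam0, hlam1⟩ := hlam
  have hlamne1 : lam ≠ 1 := ne_of_lt hlam1
  have hlamne0 : lam ≠ 0 := ne_of_gt hlam0
  set P1 := Finset.univ.filter (fun i : Fin (2*k+1) => σ i = 1) with hP1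
  set P0 := Finset.univ.filter (fun i : Fin (2*k+1) => σ i = 0) with hP0
  set Pm := Finset.univ.filter (fun i : Fin (2*k+1) => σ i = lam) with hPm
  set m1 := 2 * k - l - r with hm1def
  have hrange : 2 * k + 1 - l - r = m1 + 1 := by omega
  rw [hrange]
  -- basic partition facts
  have d10 : Disjoint P1 P0 := by
    rw [Finset.disjoint_left]
    intro a ha hb
    rw [hP1, Finset.mem_filter] at ha
    rw [hP0, Finset.mem_filter] at hb
    rw [ha.2] at hb
    norm_num at hb
  have d1m : Disjoint P1 Pm := by
    rw [Finset.disjoint_left]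
    intro a ha hb
    rw [hP1, Finset.mem_filter] at ha
    rw [hPm, Finset.mem_filter] at hb
    rw [ha.2] at hb
    exact hlamne1 hb.2.symm
  have d0m : Disjoint P0 Pm := by
    rw [Finset.disjoint_left]
    intro a ha hb
    rw [hP0, Finset.mem_filter] at ha
    rw [hPm, Finset.mem_filter] at hb
    rw [ha.2] at hb
    exact hlamne0 hb.2.symm
  have hPmcard : Pm.card = m1 + 1 := by
    have hunion : P1 ∪ P0 ∪ Pm = Finset.univ := by
      ext j
      simp only [hP1, hP0, hPm, Finset.mem_union, Finset.mem_filter, Finset.mem_univ, true_and,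
        iff_true]
      rcases hσ j with h | h | h
      · exact Or.inl (Or.inl h)
      · exact Or.inl (Or.inr h)
      · exact Or.inr h
    have hcu := congrArg Finset.card hunion
    rw [Finset.card_union_of_disjoint (Finset.disjoint_union_left.2 ⟨d1m, d0m⟩),
      Finset.card_union_of_disjoint d10, Finset.card_univ, Fintype.card_fin, hl, hr] at hcu
    omega
  -- abbreviations
  set Vm : ℝ := ∑ s ∈ Finset.range (m1+1),
      (m1.choose s : ℝ) * lam ^ s * (1 - lam) ^ (m1 - s) * f (l + 1 + s) with hVm
  set Vp : ℝ := ∑ s ∈ Finset.range (m1+1),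
      (m1.choose s : ℝ) * lam ^ s * (1 - lam) ^ (m1 - s) * f (r + 1 + (m1 - s)) with hVp
  have hgoalR : (∑ s ∈ Finset.range (m1+1),
      (m1.choose s : ℝ) * lam ^ s * (1 - lam) ^ (m1 - s) * f (r + (m1 + 1) - s)) = Vp := by
    rw [hVp]
    refine Finset.sum_congr rfl fun s hs => ?_
    have hs' := Finset.mem_range.1 hs
    congr 2
    omega
  rw [hgoalR]
  -- the mixer formula
  have hmix : ∀ i : Fin (2*k+1), σ i = lam → ∀ τ : ℝ,
      mgEPay f (Function.update σ i τ) i = τ * Vm + (1 - τ) * Vp := by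
    intro i hi τ
    have hiPm : i ∈ Pm := by rw [hPm, Finset.mem_filter]; exact ⟨Finset.mem_univ i, hi⟩
    have hMcard : (Pm.erase i).card = m1 := by
      rw [Finset.card_erase_of_mem hiPm, hPmcard]
      omega
    have hu : P1 ∪ P0 ∪ Pm.erase i = Finset.univ.erase i := by
      ext j
      simp only [hP1, hP0, hPm, Finset.mem_union, Finset.mem_erase, Finset.mem_filter,
        Finset.mem_univ, true_and, and_true]
      constructor
      · rintro ((h | h) | ⟨hne, h⟩)
        · rintro rfl; rw [hi] at h; exact hlamne1 h
        · rintro rfl; rw [hi] at h; exact hlamne0 h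
        · exact hne
      · intro hne
        rcases hσ j with h | h | h
        · exact Or.inl (Or.inl h)
        · exact Or.inl (Or.inr h)
        · exact Or.inr ⟨hne, h⟩
    have := epay_update_formula f lam σ i τ P1 P0 (Pm.erase i) d10
      (Finset.disjoint_of_subset_right (Finset.erase_subset i Pm) d1m)
      (Finset.disjoint_of_subset_right (Finset.erase_subset i Pm) d0m) hu
      (fun j hj => (Finset.mem_filter.1 hj).2)
      (fun j hj => (Finset.mem_filter.1 hj).2)
      (fun j hj => (Finset.mem_filter.1 (Finset.mem_of_mem_erase hj)).2)
    rw [hMcard, hl, hr] at this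
    exact this
  have hmixbase : ∀ i : Fin (2*k+1), σ i = lam →
      mgEPay f σ i = lam * Vm + (1 - lam) * Vp := by
    intro i hi
    conv_lhs => rw [← Function.update_eq_self i σ]
    rw [hmix i hi (σ i), hi]
  have hfs : ∀ a b : ℕ, 1 ≤ a → b ≤ 2*k+1 → a < b → f b ≤ f a := by
    intro a b ha hb hab
    exact (hf (Set.mem_Icc.2 ⟨ha, by omega⟩) (Set.mem_Icc.2 ⟨by omega, hb⟩) hab).le
  have hcoeff : ∀ n t : ℕ, (0:ℝ) ≤ (n.choose t : ℝ) * lam ^ t * (1 - lam) ^ (n - t) := by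
    intro n t
    have h1' : (0:ℝ) ≤ lam := le_of_lt hlam0
    have h2' : (0:ℝ) ≤ 1 - lam := by linarith
    positivity
  constructor
  · -- NE → indifference
    intro hNE
    have hPmne : Pm.Nonempty := Finset.card_pos.1 (by rw [hPmcard]; omega)
    obtain ⟨i, hiPm⟩ := hPmne
    have hi : σ i = lam := (Finset.mem_filter.1 hiPm).2
    have h1le := hNE.2 i 1 zero_le_one le_rfl
    have h0le := hNE.2 i 0 le_rfl zero_le_one
    rw [hmix i hi 1, hmixbase i hi] at h1le
    rw [hmix i hi 0, hmixbase i hi] at h0le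
    have hle1 : Vm ≤ Vp := by nlinarith
    have hle2 : Vp ≤ Vm := by nlinarith
    linarith
  · -- indifference → NE
    intro hV
    constructor
    · intro i
      rcases hσ i with h | h | h <;> rw [h] <;> constructor <;> linarith
    · intro i τ hτ0 hτ1
      rcases hσ i with hi | hi | hi
      · -- σ i = 1
        have hiP1 : i ∈ P1 := by rw [hP1, Finset.mem_filter]; exact ⟨Finset.mem_univ i, hi⟩
        have hl1 : 1 ≤ l := by rw [← hl]; exact Finset.card_pos.2 ⟨i, hiP1⟩
        have hOcard : (P1.erase i).card = l - 1 := by rw [Finset.card_erase_of_mem hiP1, hl]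
        have hu : P1.erase i ∪ P0 ∪ Pm = Finset.univ.erase i := by
          ext j
          simp only [hP1, hP0, hPm, Finset.mem_union, Finset.mem_erase, Finset.mem_filter,
            Finset.mem_univ, true_and, and_true]
          constructor
          · rintro ((⟨hne, h⟩ | h) | h)
            · exact hne
            · rintro rfl; rw [hi] at h; norm_num at h
            · rintro rfl; rw [hi] at h; exact hlamne1 h.symm
          · intro hne
            rcases hσ j with h | h | h
            · exact Or.inl (Or.inl ⟨hne, h⟩)
            · exact Or.inl (Or.inr h)
            · exact Or.inr h
        have hform : ∀ t : ℝ, mgEPay f (Function.update σ i t) i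
            = t * ∑ s ∈ Finset.range (m1+1+1),
                ((m1+1).choose s : ℝ) * lam ^ s * (1 - lam) ^ (m1+1-s) * f (l + s)
              + (1 - t) * ∑ s ∈ Finset.range (m1+1+1),
                ((m1+1).choose s : ℝ) * lam ^ s * (1 - lam) ^ (m1+1-s)
                  * f (r + 1 + (m1+1-s)) := by
          intro t
          have hform0 := epay_update_formula f lam σ i t (P1.erase i) P0 Pm
            (Finset.disjoint_of_subset_left (Finset.erase_subset i P1) d10)
            (Finset.disjoint_of_subset_left (Finset.erase_subset i P1) d1m)
            d0m hu
            (fun j hj => (Finset.mem_filter.1 (Finset.mem_of_mem_erase hj)).2)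
            (fun j hj => (Finset.mem_filter.1 hj).2)
            (fun j hj => (Finset.mem_filter.1 hj).2)
          rw [hOcard, hr, hPmcard] at hform0
          rw [hform0]
          congr 1
          congr 1
          refine Finset.sum_congr rfl fun s hs => ?_
          have : l - 1 + 1 + s = l + s := by omega
          rw [this]
        set A : ℝ := ∑ s ∈ Finset.range (m1+1+1),
            ((m1+1).choose s : ℝ) * lam ^ s * (1 - lam) ^ (m1+1-s) * f (l + s) with hAdef
        set B : ℝ := ∑ s ∈ Finset.range (m1+1+1),
            ((m1+1).choose s : ℝ) * lam ^ s * (1 - lam) ^ (m1+1-s)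
              * f (r + 1 + (m1+1-s)) with hBdef
        have hbase : mgEPay f σ i = A := by
          conv_lhs => rw [← Function.update_eq_self i σ]
          rw [hform (σ i), hi]
          ring
        rw [hform τ, hbase]
        have hE : Vm ≤ ∑ t ∈ Finset.range (m1+1),
            (m1.choose t : ℝ) * lam ^ t * (1 - lam) ^ (m1 - t) * f (l + t) := by
          rw [hVm]
          refine Finset.sum_le_sum fun t ht => ?_
          have ht' := Finset.mem_range.1 ht
          exact mul_le_mul_of_nonneg_left (hfs _ _ (by omega) (by omega) (by omega))
            (hcoeff m1 t)
        have hD : (∑ t ∈ Finset.range (m1+1),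
            (m1.choose t : ℝ) * lam ^ t * (1 - lam) ^ (m1 - t) * f (r + 1 + (m1 + 1 - t)))
              ≤ Vp := by
          rw [hVp]
          refine Finset.sum_le_sum fun t ht => ?_
          have ht' := Finset.mem_range.1 ht
          exact mul_le_mul_of_nonneg_left (hfs _ _ (by omega) (by omega) (by omega))
            (hcoeff m1 t)
        have hA2 : A = (1 - lam) * (∑ t ∈ Finset.range (m1+1),
            (m1.choose t : ℝ) * lam ^ t * (1 - lam) ^ (m1 - t) * f (l + t)) + lam * Vm := by
          rw [hAdef]
          have hp := pascal m1 lam (1 - lam) (fun t => f (l + t))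
          rw [hp, hVm]
          congr 1
          congr 1
          refine Finset.sum_congr rfl fun t ht => ?_
          have : l + (t + 1) = l + 1 + t := by omega
          rw [this]
        have hB2 : B = (1 - lam) * (∑ t ∈ Finset.range (m1+1),
            (m1.choose t : ℝ) * lam ^ t * (1 - lam) ^ (m1 - t) * f (r + 1 + (m1 + 1 - t)))
              + lam * Vp := by
          rw [hBdef]
          have hp := pascal m1 lam (1 - lam) (fun t => f (r + 1 + (m1 + 1 - t)))
          rw [hp, hVp]
          congr 1
          congr 1
          refine Finset.sum_congr rfl fun t ht => ?_
          have : m1 + 1 - (t + 1) = m1 - t := by omega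
          rw [this]
        have k1 : (1 - lam) * Vm ≤ (1 - lam) * (∑ t ∈ Finset.range (m1+1),
            (m1.choose t : ℝ) * lam ^ t * (1 - lam) ^ (m1 - t) * f (l + t)) :=
          mul_le_mul_of_nonneg_left hE (by linarith)
        have k2 : (1 - lam) * (∑ t ∈ Finset.range (m1+1),
            (m1.choose t : ℝ) * lam ^ t * (1 - lam) ^ (m1 - t) * f (r + 1 + (m1 + 1 - t)))
              ≤ (1 - lam) * Vp :=
          mul_le_mul_of_nonneg_left hD (by linarith)
        have hBA : B ≤ A := by linarith
        have hmu := mul_le_mul_of_nonneg_left hBA (by linarith : (0:ℝ) ≤ 1 - τ)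
        linarith
      · -- σ i = 0
        have hiP0 : i ∈ P0 := by rw [hP0, Finset.mem_filter]; exact ⟨Finset.mem_univ i, hi⟩
        have hr1 : 1 ≤ r := by rw [← hr]; exact Finset.card_pos.2 ⟨i, hiP0⟩
        have hZcard : (P0.erase i).card = r - 1 := by rw [Finset.card_erase_of_mem hiP0, hr]
        have hu : P1 ∪ P0.erase i ∪ Pm = Finset.univ.erase i := by
          ext j
          simp only [hP1, hP0, hPm, Finset.mem_union, Finset.mem_erase, Finset.mem_filter,
            Finset.mem_univ, true_and, and_true]
          constructor
          · rintro ((h | ⟨hne, h⟩) | h)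
            · rintro rfl; rw [hi] at h; norm_num at h
            · exact hne
            · rintro rfl; rw [hi] at h; exact hlamne0 h.symm
          · intro hne
            rcases hσ j with h | h | h
            · exact Or.inl (Or.inl h)
            · exact Or.inl (Or.inr ⟨hne, h⟩)
            · exact Or.inr h
        have hform : ∀ t : ℝ, mgEPay f (Function.update σ i t) i
            = t * ∑ s ∈ Finset.range (m1+1+1),
                ((m1+1).choose s : ℝ) * lam ^ s * (1 - lam) ^ (m1+1-s) * f (l + 1 + s)
              + (1 - t) * ∑ s ∈ Finset.range (m1+1+1),
                ((m1+1).choose s : ℝ) * lam ^ s * (1 - lam) ^ (m1+1-s)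
                  * f (r + (m1+1-s)) := by
          intro t
          have hform0 := epay_update_formula f lam σ i t P1 (P0.erase i) Pm
            (Finset.disjoint_of_subset_right (Finset.erase_subset i P0) d10)
            d1m
            (Finset.disjoint_of_subset_left (Finset.erase_subset i P0) d0m) hu
            (fun j hj => (Finset.mem_filter.1 hj).2)
            (fun j hj => (Finset.mem_filter.1 (Finset.mem_of_mem_erase hj)).2)
            (fun j hj => (Finset.mem_filter.1 hj).2)
          rw [hZcard, hl, hPmcard] at hform0
          rw [hform0]
          congr 1
          congr 1
          refine Finset.sum_congr rfl fun s hs => ?_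
          have : r - 1 + 1 + (m1 + 1 - s) = r + (m1 + 1 - s) := by omega
          rw [this]
        set A : ℝ := ∑ s ∈ Finset.range (m1+1+1),
            ((m1+1).choose s : ℝ) * lam ^ s * (1 - lam) ^ (m1+1-s) * f (l + 1 + s) with hAdef
        set B : ℝ := ∑ s ∈ Finset.range (m1+1+1),
            ((m1+1).choose s : ℝ) * lam ^ s * (1 - lam) ^ (m1+1-s)
              * f (r + (m1+1-s)) with hBdef
        have hbase : mgEPay f σ i = B := by
          conv_lhs => rw [← Function.update_eq_self i σ]
          rw [hform (σ i), hi]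
          ring
        rw [hform τ, hbase]
        have hE : (∑ t ∈ Finset.range (m1+1),
            (m1.choose t : ℝ) * lam ^ t * (1 - lam) ^ (m1 - t) * f (l + 1 + (t + 1))) ≤ Vm := by
          rw [hVm]
          refine Finset.sum_le_sum fun t ht => ?_
          have ht' := Finset.mem_range.1 ht
          exact mul_le_mul_of_nonneg_left (hfs _ _ (by omega) (by omega) (by omega))
            (hcoeff m1 t)
        have hD : Vp ≤ ∑ t ∈ Finset.range (m1+1),
            (m1.choose t : ℝ) * lam ^ t * (1 - lam) ^ (m1 - t) * f (r + (m1 - t)) := by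
          rw [hVp]
          refine Finset.sum_le_sum fun t ht => ?_
          have ht' := Finset.mem_range.1 ht
          exact mul_le_mul_of_nonneg_left (hfs _ _ (by omega) (by omega) (by omega))
            (hcoeff m1 t)
        have hA2 : A = (1 - lam) * Vm + lam * (∑ t ∈ Finset.range (m1+1),
            (m1.choose t : ℝ) * lam ^ t * (1 - lam) ^ (m1 - t) * f (l + 1 + (t + 1))) := by
          rw [hAdef]
          have hp := pascal m1 lam (1 - lam) (fun t => f (l + 1 + t))
          rw [hp, hVm]
        have hB2 : B = (1 - lam) * Vp + lam * (∑ t ∈ Finset.range (m1+1),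
            (m1.choose t : ℝ) * lam ^ t * (1 - lam) ^ (m1 - t) * f (r + (m1 - t))) := by
          rw [hBdef]
          have hp := pascal m1 lam (1 - lam) (fun t => f (r + (m1 + 1 - t)))
          rw [hp, hVp]
          congr 1
          · congr 1
            refine Finset.sum_congr rfl fun t ht => ?_
            have ht' := Finset.mem_range.1 ht
            have : r + (m1 + 1 - t) = r + 1 + (m1 - t) := by omega
            rw [this]
          · congr 1
            refine Finset.sum_congr rfl fun t ht => ?_
            have : m1 + 1 - (t + 1) = m1 - t := by omega
            rw [this]
        have k1 : lam * (∑ t ∈ Finset.range (m1+1),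
            (m1.choose t : ℝ) * lam ^ t * (1 - lam) ^ (m1 - t) * f (l + 1 + (t + 1)))
              ≤ lam * Vm :=
          mul_le_mul_of_nonneg_left hE (by linarith)
        have k2 : lam * Vp ≤ lam * (∑ t ∈ Finset.range (m1+1),
            (m1.choose t : ℝ) * lam ^ t * (1 - lam) ^ (m1 - t) * f (r + (m1 - t))) :=
          mul_le_mul_of_nonneg_left hD (by linarith)
        have hAB : A ≤ B := by linarith
        have hmu := mul_le_mul_of_nonneg_left hAB hτ0
        linarith
      · -- mixer
        rw [hmix i hi τ, hmixbase i hi, hV]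
        have e1 : τ * Vp + (1 - τ) * Vp = Vp := by ring
        have e2 : lam * Vp + (1 - lam) * Vp = Vp := by ring
        linarith
end

section
/- In the minority game with 2k+1 players, let ℓ, r ∈ {0,...,2k+1} with ℓ + r ≤ 2k - 1 (so there are at least 2 mixers). There exists λ ∈ (0,1) such that the profile of type (ℓ, r, λ) is a Nash equilibrium if and only if max{ℓ, r} < k; moreover, when it exists, this λ is unique. -/
/-!
Put `n + 1 = 2k - ℓ - r` and `g s = f (ℓ + 1 + s) - f (2k + 1 - ℓ - s)`. The indifference equation
says that the Bernstein polynomial `∑ g s • b_{n+1,s}` vanishes at `λ`. Since `f` is strictly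
decreasing, so is `g`, and the derivative `(n + 1) ∑ (g (s + 1) - g s) • b_{n,s}` of that
polynomial is negative on `(0, 1)`. The polynomial therefore decreases strictly from `g 0` to
`g (n + 1)`, so it has a root in `(0, 1)`, necessarily unique, iff `g (n + 1) < 0 < g 0`,
i.e. iff `ℓ < k` and `r < k`.
-/

open Finset Polynomial

lemma StrictAntiOn.exists_mem_Ioo_eq_iff {α δ : Type*} [ConditionallyCompleteLinearOrder α]
    [TopologicalSpace α] [OrderTopology α] [DenselyOrdered α] [LinearOrder δ]
    [TopologicalSpace δ] [OrderClosedTopology δ] {φ : α → δ} {a b : α} {c : δ}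
    (hφ : StrictAntiOn φ (Set.Icc a b)) (hab : a ≤ b) (hcont : ContinuousOn φ (Set.Icc a b)) :
    (∃ x ∈ Set.Ioo a b, φ x = c) ↔ c ∈ Set.Ioo (φ b) (φ a) := by
  constructor
  · rintro ⟨x, hx, rfl⟩
    have hx' := Set.Ioo_subset_Icc_self hx
    exact ⟨hφ hx' (Set.right_mem_Icc.2 hab) hx.2, hφ (Set.left_mem_Icc.2 hab) hx' hx.1⟩
  · exact fun hc => intermediate_value_Ioo' hab hcont hc

namespace bernsteinPolynomial

lemma eval_pos {n ν : ℕ} (h : ν ≤ n) {x : ℝ} (hx : x ∈ Set.Ioo 0 1) :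
    0 < (bernsteinPolynomial ℝ n ν).eval x := by
  have hx₀ : 0 < x := hx.1
  have hx₁ : 0 < 1 - x := sub_pos.2 hx.2
  have hchoose : (0 : ℝ) < n.choose ν := by exact_mod_cast Nat.choose_pos h
  simp only [bernsteinPolynomial, eval_mul, eval_pow, eval_sub, eval_one, eval_X, eval_natCast]
  positivity

lemma eval_zero_sum_smul (n : ℕ) (g : ℕ → ℝ) :
    (∑ ν ∈ range (n + 1), g ν • bernsteinPolynomial ℝ n ν).eval 0 = g 0 := by
  simp [eval_finsetSum, eval_at_0]

lemma eval_one_sum_smul (n : ℕ) (g : ℕ → ℝ) :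
    (∑ ν ∈ range (n + 1), g ν • bernsteinPolynomial ℝ n ν).eval 1 = g n := by
  simp [eval_finsetSum, eval_at_1]

lemma derivative_sum_smul {R : Type*} [CommRing R] (n : ℕ) (g : ℕ → R) :
    derivative (∑ ν ∈ range (n + 2), g ν • bernsteinPolynomial R (n + 1) ν) =
      (n + 1 : R[X]) * ∑ ν ∈ range (n + 1), (g (ν + 1) - g ν) • bernsteinPolynomial R n ν := by
  have head : derivative (g 0 • bernsteinPolynomial R (n + 1) 0) =
      (n + 1 : R[X]) * -(g 0 • bernsteinPolynomial R n 0) := by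
    rw [derivative_smul, derivative_zero, Nat.add_sub_cancel]
    simp only [smul_eq_C_mul]
    push_cast
    ring
  have tail : ∀ ν, derivative (g (ν + 1) • bernsteinPolynomial R (n + 1) (ν + 1)) =
      (n + 1 : R[X]) * (g (ν + 1) • bernsteinPolynomial R n ν
        - g (ν + 1) • bernsteinPolynomial R n (ν + 1)) := by
    intro ν
    rw [derivative_smul, derivative_succ_aux]
    simp only [smul_eq_C_mul]
    ring
  have shift : ∑ ν ∈ range (n + 1), g (ν + 1) • bernsteinPolynomial R n (ν + 1)
      + g 0 • bernsteinPolynomial R n 0 = ∑ ν ∈ range (n + 1), g ν • bernsteinPolynomial R n ν := by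
    rw [← sum_range_succ' (fun ν => g ν • bernsteinPolynomial R n ν), sum_range_succ,
      eq_zero_of_lt R (Nat.lt_succ_self n), smul_zero, add_zero]
  rw [derivative_sum, sum_range_succ', head]
  simp only [tail, ← mul_sum, sum_sub_distrib, sub_smul, ← shift]
  ring

lemma strictAntiOn_eval_sum_smul {n : ℕ} {g : ℕ → ℝ} (hg : ∀ ν ≤ n, g (ν + 1) < g ν) :
    StrictAntiOn (fun x => (∑ ν ∈ range (n + 2), g ν • bernsteinPolynomial ℝ (n + 1) ν).eval x)
      (Set.Icc 0 1) := by
  refine strictAntiOn_of_deriv_neg (convex_Icc 0 1) (Polynomial.continuousOn _) fun x hx => ?_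
  rw [interior_Icc] at hx
  rw [Polynomial.deriv, derivative_sum_smul, eval_mul, eval_finsetSum]
  refine mul_neg_of_pos_of_neg (by simp only [eval_add, eval_one, eval_natCast]; positivity) ?_
  refine sum_neg (fun ν hν => ?_) nonempty_range_add_one
  have hν : ν ≤ n := Nat.lt_succ_iff.1 (mem_range.1 hν)
  rw [eval_smul, smul_eq_mul]
  exact mul_neg_of_neg_of_pos (sub_neg.2 (hg ν hν)) (eval_pos hν hx)

end bernsteinPolynomial

/-- Existence and uniqueness of equilibria of type (ℓ,r,λ) with at least two
mixers: a λ ∈ (0,1) solving the mixers' indifference equation exists iff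
max{ℓ,r} < k, and it is unique when it exists.  Here m = 2k+1-ℓ-r ≥ 2. -/
theorem stmt_9 (k : ℕ) (hk : 1 ≤ k) (f : ℕ → ℝ)
    (hf : StrictAntiOn f (Set.Icc 1 (2 * k + 1)))
    (l r : ℕ) (hlr : l + r ≤ 2 * k - 1)
    (indiff : ℝ → Prop)
    (hindiff : ∀ lam : ℝ, indiff lam ↔
      (∑ s ∈ Finset.range (2 * k + 1 - l - r),
        ((2 * k - l - r).choose s : ℝ) * lam ^ s * (1 - lam) ^ (2 * k - l - r - s)
          * f (l + 1 + s)) =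
      ∑ s ∈ Finset.range (2 * k + 1 - l - r),
        ((2 * k - l - r).choose s : ℝ) * lam ^ s * (1 - lam) ^ (2 * k - l - r - s)
          * f (r + (2 * k + 1 - l - r) - s)) :
    ((∃ lam ∈ Set.Ioo (0:ℝ) 1, indiff lam) ↔ max l r < k) ∧
      (∀ lam₁ ∈ Set.Ioo (0:ℝ) 1, ∀ lam₂ ∈ Set.Ioo (0:ℝ) 1,
        indiff lam₁ → indiff lam₂ → lam₁ = lam₂) := by
  obtain ⟨n, hn⟩ : ∃ n, 2 * k - l - r = n + 1 := ⟨2 * k - l - r - 1, by omega⟩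
  set g : ℕ → ℝ := fun s => f (l + 1 + s) - f (2 * k + 1 - l - s) with hg
  set φ : ℝ → ℝ := fun x => (∑ ν ∈ range (n + 2), g ν • bernsteinPolynomial ℝ (n + 1) ν).eval x
  have indiff_iff (x : ℝ) : indiff x ↔ φ x = 0 := by
    rw [hindiff, ← sub_eq_zero, ← sum_sub_distrib, show 2 * k + 1 - l - r = n + 2 by omega, hn]
    simp only [φ, eval_finsetSum]
    refine Eq.congr_left (sum_congr rfl fun s hs => ?_)
    rw [show r + (n + 2) - s = 2 * k + 1 - l - s by omega]
    simp only [eval_smul, bernsteinPolynomial, eval_mul, eval_pow, eval_sub, eval_one, eval_X,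
      eval_natCast, smul_eq_mul, hg]
    ring
  have hg_succ : ∀ ν ≤ n, g (ν + 1) < g ν := fun ν hν => by
    have h₁ := hf (a := l + 1 + ν) (b := l + 1 + (ν + 1)) (by simp; omega) (by simp; omega)
      (by omega)
    have h₂ := hf (a := 2 * k + 1 - l - (ν + 1)) (b := 2 * k + 1 - l - ν) (by simp; omega)
      (by simp; omega) (by omega)
    simp only [hg]
    linarith
  have hφ := bernsteinPolynomial.strictAntiOn_eval_sum_smul hg_succ
  have hg_zero : 0 < g 0 ↔ l < k := by
    rw [hg, sub_pos, hf.lt_iff_gt (by simp; omega) (by simp; omega)]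
    omega
  have hg_last : g (n + 1) < 0 ↔ r < k := by
    rw [hg, sub_neg, hf.lt_iff_gt (by simp; omega) (by simp; omega)]
    omega
  refine ⟨?_, fun x hx y hy hix hiy => ?_⟩
  · simp only [indiff_iff]
    rw [hφ.exists_mem_Ioo_eq_iff zero_le_one (Polynomial.continuousOn _),
      bernsteinPolynomial.eval_zero_sum_smul, bernsteinPolynomial.eval_one_sum_smul, Set.mem_Ioo,
      hg_zero, hg_last, max_lt_iff, and_comm]
  · exact hφ.injOn (Set.Ioo_subset_Icc_self hx) (Set.Ioo_subset_Icc_self hy)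
      (((indiff_iff x).1 hix).trans ((indiff_iff y).1 hiy).symm)
end

section
/- In the minority game with 2k+1 players, for m ≥ 2 mixers and ℓ ≥ r with ℓ + 1 < r + m, the function λ ↦ v₋(ℓ+1,r,λ) - v₊(ℓ,r+1,λ) is strictly decreasing on (0,1), is positive at λ = 0 and negative at λ = 1, where v₋(ℓ+1,r,λ) = ∑_{s=0}^{m-1} C(m-1,s) λ^s (1-λ)^{m-1-s} f(ℓ+1+s) and v₊(ℓ,r+1,λ) = ∑_{s=0}^{m-1} C(m-1,s) λ^s (1-λ)^{m-1-s} f(r+m-s). -/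
/-!
Both sums are Bernstein polynomials of degree `m - 1` in `λ`, so their difference is the
Bernstein combination with coefficients `c s = f (ℓ + 1 + s) - f (r + m - s)`, which strictly
decrease in `s` because `f` does. The derivative of a Bernstein combination of degree `n + 1` is
`n + 1` times the Bernstein combination of degree `n` of the forward differences
`c (s + 1) - c s`; these are all negative, so the difference is strictly decreasing. Its values at
`λ = 0` and `λ = 1` are the extreme coefficients `c 0 > 0` and `c (m - 1) < 0`.
-/

open Finset Polynomial

noncomputable def bernsteinCombination {R : Type*} [CommRing R] (n : ℕ) (c : ℕ → R) : R[X] :=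
  ∑ ν ∈ range (n + 1), c ν • bernsteinPolynomial R n ν

namespace bernsteinCombination

variable {R : Type*} [CommRing R]

theorem eval_eq (n : ℕ) (c : ℕ → R) (x : R) :
    (bernsteinCombination n c).eval x =
      ∑ ν ∈ range (n + 1), (n.choose ν : R) * x ^ ν * (1 - x) ^ (n - ν) * c ν := by
  simp only [bernsteinCombination, eval_finsetSum, eval_smul, bernsteinPolynomial, eval_mul,
    eval_pow, eval_sub, eval_one, eval_X, eval_natCast, smul_eq_mul]
  exact sum_congr rfl fun ν _ => mul_comm _ _

theorem eval_at_zero (n : ℕ) (c : ℕ → R) : (bernsteinCombination n c).eval 0 = c 0 := by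
  simp [bernsteinCombination, eval_finsetSum, bernsteinPolynomial.eval_at_0]

theorem eval_at_one (n : ℕ) (c : ℕ → R) : (bernsteinCombination n c).eval 1 = c n := by
  simp [bernsteinCombination, eval_finsetSum, bernsteinPolynomial.eval_at_1]

theorem derivative_succ (n : ℕ) (c : ℕ → R) :
    derivative (bernsteinCombination (n + 1) c) =
      (n + 1 : R[X]) * bernsteinCombination n (fun ν => c (ν + 1) - c ν) := by
  have shift : ∑ ν ∈ range (n + 1), c (ν + 1) • bernsteinPolynomial R n (ν + 1)
      + c 0 • bernsteinPolynomial R n 0 =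
        ∑ ν ∈ range (n + 1), c ν • bernsteinPolynomial R n ν := by
    rw [← sum_range_succ' (fun ν => c ν • bernsteinPolynomial R n ν), sum_range_succ,
      bernsteinPolynomial.eq_zero_of_lt R n.lt_succ_self, smul_zero, add_zero]
  rw [bernsteinCombination, map_sum, sum_range_succ']
  simp only [derivative_smul, bernsteinPolynomial.derivative_succ_aux,
    bernsteinPolynomial.derivative_zero, Nat.add_sub_cancel, ← mul_smul_comm, ← mul_sum,
    Nat.cast_add, Nat.cast_one, neg_mul]
  rw [bernsteinCombination, smul_neg, ← mul_smul_comm, ← mul_neg, ← mul_add]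
  congr 1
  simp only [sub_smul, smul_sub, sum_sub_distrib, ← shift]
  abel

theorem eval_lt_zero {n : ℕ} {c : ℕ → ℝ} (hc : ∀ ν ≤ n, c ν < 0) {x : ℝ}
    (hx : x ∈ Set.Ioo 0 1) : (bernsteinCombination n c).eval x < 0 := by
  rw [eval_eq]
  refine sum_neg (fun ν hν => ?_) nonempty_range_add_one
  have hνn : ν ≤ n := Nat.lt_succ_iff.mp (mem_range.mp hν)
  have := Nat.choose_pos hνn
  have := hx.1
  have : 0 < 1 - x := sub_pos.2 hx.2
  exact mul_neg_of_pos_of_neg (by positivity) (hc ν hνn)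

theorem strictAntiOn {n : ℕ} {c : ℕ → ℝ} (hc : ∀ ν ≤ n, c (ν + 1) < c ν) :
    StrictAntiOn (fun x => (bernsteinCombination (n + 1) c).eval x) (Set.Icc 0 1) := by
  refine strictAntiOn_of_deriv_neg (convex_Icc 0 1) (Polynomial.continuousOn _) fun x hx => ?_
  rw [interior_Icc] at hx
  rw [Polynomial.deriv, derivative_succ, eval_mul]
  exact mul_neg_of_pos_of_neg (by simp; positivity)
    (eval_lt_zero (fun ν hν => sub_neg.2 (hc ν hν)) hx)

end bernsteinCombination

/-- For m ≥ 2 mixers and ℓ ≥ r with ℓ + 1 < r + m, the difference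
λ ↦ v₋(ℓ+1,r,λ) - v₊(ℓ,r+1,λ) is strictly decreasing on (0,1), positive at λ = 0
and negative at λ = 1. -/
theorem stmt_10 (k l r m : ℕ) (hm : 2 ≤ m) (hrl : r ≤ l) (hlt : l + 1 < r + m)
    (hsum : l + r + m = 2 * k + 1)
    (f : ℕ → ℝ) (hf : StrictAntiOn f (Set.Icc 1 (2 * k + 1))) :
    StrictAntiOn (fun lam : ℝ =>
      (∑ s ∈ Finset.range m, ((m - 1).choose s : ℝ) * lam ^ s * (1 - lam) ^ (m - 1 - s)
          * f (l + 1 + s)) -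
        ∑ s ∈ Finset.range m, ((m - 1).choose s : ℝ) * lam ^ s * (1 - lam) ^ (m - 1 - s)
          * f (r + m - s)) (Set.Ioo 0 1) ∧
    (0 < (∑ s ∈ Finset.range m, ((m - 1).choose s : ℝ) * (0:ℝ) ^ s * (1 - 0) ^ (m - 1 - s)
          * f (l + 1 + s)) -
        ∑ s ∈ Finset.range m, ((m - 1).choose s : ℝ) * (0:ℝ) ^ s * (1 - 0) ^ (m - 1 - s)
          * f (r + m - s)) ∧
    ((∑ s ∈ Finset.range m, ((m - 1).choose s : ℝ) * (1:ℝ) ^ s * (1 - 1) ^ (m - 1 - s)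
          * f (l + 1 + s)) -
        ∑ s ∈ Finset.range m, ((m - 1).choose s : ℝ) * (1:ℝ) ^ s * (1 - 1) ^ (m - 1 - s)
          * f (r + m - s) < 0) := by
  obtain ⟨n, rfl⟩ : ∃ n, m = n + 1 + 1 := ⟨m - 2, by omega⟩
  have hf' {a b : ℕ} (ha : 1 ≤ a) (hb : b ≤ 2 * k + 1) (hab : a < b) : f b < f a :=
    hf ⟨ha, by omega⟩ ⟨by omega, hb⟩ hab
  let c (s : ℕ) : ℝ := f (l + 1 + s) - f (r + (n + 1 + 1) - s)
  have hv (lam : ℝ) :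
      (∑ s ∈ range (n + 1 + 1), ((n + 1 + 1 - 1).choose s : ℝ) * lam ^ s
          * (1 - lam) ^ (n + 1 + 1 - 1 - s) * f (l + 1 + s)) -
        ∑ s ∈ range (n + 1 + 1), ((n + 1 + 1 - 1).choose s : ℝ) * lam ^ s
          * (1 - lam) ^ (n + 1 + 1 - 1 - s) * f (r + (n + 1 + 1) - s) =
      (bernsteinCombination (n + 1) c).eval lam := by
    rw [bernsteinCombination.eval_eq, ← sum_sub_distrib, Nat.add_sub_cancel]
    exact sum_congr rfl fun s _ => by ring
  simp only [hv, bernsteinCombination.eval_at_zero, bernsteinCombination.eval_at_one]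
  refine ⟨(bernsteinCombination.strictAntiOn fun s hs => ?_).mono Set.Ioo_subset_Icc_self,
    sub_pos.2 (hf' (by omega) (by omega) (by omega)),
    sub_neg.2 (hf' (by omega) (by omega) (by omega))⟩
  exact sub_lt_sub (hf' (by omega) (by omega) (by omega)) (hf' (by omega) (by omega) (by omega))
end

section
/- In the minority game with 2k+1 players, there is no Nash equilibrium with exactly two mixers. -/
open Finset

/-! ### Auxiliary machinery -/

/-- Profile equal to `b` except values `c₀` at `i₁` and `c₁` at `i₂`. -/
def mgA {N : ℕ} (b : Fin N → Bool) (i₁ i₂ : Fin N) (c₀ c₁ : Bool) : Fin N → Bool :=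
  Function.update (Function.update b i₁ c₀) i₂ c₁

lemma mgA_at1 {N : ℕ} (b : Fin N → Bool) {i₁ i₂ : Fin N} (hne : i₁ ≠ i₂) (c₀ c₁ : Bool) :
    mgA b i₁ i₂ c₀ c₁ i₁ = c₀ := by
  simp [mgA, Function.update_of_ne hne]

lemma mgA_at2 {N : ℕ} (b : Fin N → Bool) (i₁ i₂ : Fin N) (c₀ c₁ : Bool) :
    mgA b i₁ i₂ c₀ c₁ i₂ = c₁ := by
  simp [mgA]

lemma mgA_other {N : ℕ} (b : Fin N → Bool) {i₁ i₂ j : Fin N} (h1 : j ≠ i₁) (h2 : j ≠ i₂)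
    (c₀ c₁ : Bool) : mgA b i₁ i₂ c₀ c₁ j = b j := by
  simp [mgA, Function.update_of_ne h1, Function.update_of_ne h2]

lemma mgProb_eq_zero {N : ℕ} (σ : Fin N → ℝ) (b : Fin N → Bool) (s : Finset (Fin N))
    (hdet : ∀ j, j ∉ s → σ j = if b j then 1 else 0)
    (a : Fin N → Bool) (j : Fin N) (hj : j ∉ s) (hne : a j ≠ b j) :
    mgProb σ a = 0 := by
  unfold mgProb
  apply Finset.prod_eq_zero (Finset.mem_univ j)
  have h := hdet j hj
  cases hb : b j <;> cases haj : a j <;> simp_all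

lemma mgProb_conform {N : ℕ} (σ : Fin N → ℝ) (b : Fin N → Bool) (s : Finset (Fin N))
    (hdet : ∀ j, j ∉ s → σ j = if b j then 1 else 0)
    (a : Fin N → Bool) (ha : ∀ j, j ∉ s → a j = b j) :
    mgProb σ a = ∏ j ∈ s, (if a j then σ j else 1 - σ j) := by
  unfold mgProb
  refine (Finset.prod_subset (Finset.subset_univ s) ?_).symm
  intro j _ hj
  have h := hdet j hj
  have h2 := ha j hj
  cases hb : b j <;> simp_all

/-- count of players agreeing with `i₁` in the profile `mgA b i₁ i₂ c₀ c₁`. -/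
def mgCnt {N : ℕ} (b : Fin N → Bool) (i₁ i₂ : Fin N) (c₀ c₁ : Bool) : ℕ :=
  (Finset.univ.filter fun j => mgA b i₁ i₂ c₀ c₁ j = c₀).card

lemma mgCnt_val {N : ℕ} (b : Fin N → Bool) {i₁ i₂ : Fin N} (hne : i₁ ≠ i₂) (c₀ c₁ : Bool) :
    mgCnt b i₁ i₂ c₀ c₁ =
      ((Finset.univ \ {i₁, i₂}).filter fun j => b j = c₀).card + 1 +
        (if c₁ = c₀ then 1 else 0) := by
  classical
  unfold mgCnt
  have hsplit : (Finset.univ.filter fun j => mgA b i₁ i₂ c₀ c₁ j = c₀) =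
      ((Finset.univ \ ({i₁, i₂} : Finset (Fin N))).filter fun j => mgA b i₁ i₂ c₀ c₁ j = c₀) ∪
      (({i₁, i₂} : Finset (Fin N)).filter fun j => mgA b i₁ i₂ c₀ c₁ j = c₀) := by
    rw [← Finset.filter_union, Finset.sdiff_union_of_subset (Finset.subset_univ _)]
  rw [hsplit, Finset.card_union_of_disjoint
    (Finset.disjoint_filter_filter Finset.sdiff_disjoint)]
  have e1 : ((Finset.univ \ ({i₁, i₂} : Finset (Fin N))).filter
        fun j => mgA b i₁ i₂ c₀ c₁ j = c₀) =
      ((Finset.univ \ ({i₁, i₂} : Finset (Fin N))).filter fun j => b j = c₀) := by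
    apply Finset.filter_congr
    intro j hj
    simp only [Finset.mem_sdiff, Finset.mem_insert, Finset.mem_singleton, not_or] at hj
    rw [mgA_other b hj.2.1 hj.2.2]
  have e2 : (({i₁, i₂} : Finset (Fin N)).filter fun j => mgA b i₁ i₂ c₀ c₁ j = c₀).card =
      1 + (if c₁ = c₀ then 1 else 0) := by
    rw [show ({i₁, i₂} : Finset (Fin N)) = insert i₁ {i₂} from rfl, Finset.filter_insert,
      if_pos (mgA_at1 b hne c₀ c₁), Finset.filter_singleton]
    by_cases h : c₁ = c₀
    · rw [if_pos (by rw [mgA_at2]; exact h)]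
      rw [Finset.card_insert_of_notMem (by simp [hne])]
      simp [h]
    · rw [if_neg (by rw [mgA_at2]; exact h)]
      simp [h]
  rw [e1, e2]
  omega

lemma mgEPay_two {N : ℕ} (f : ℕ → ℝ) (σ : Fin N → ℝ) (b : Fin N → Bool)
    {i₁ i₂ : Fin N} (hne : i₁ ≠ i₂)
    (hdet : ∀ j, j ∉ ({i₁, i₂} : Finset (Fin N)) → σ j = if b j then 1 else 0) :
    mgEPay f σ i₁ =
      σ i₁ * (σ i₂ * f (mgCnt b i₁ i₂ true true) + (1 - σ i₂) * f (mgCnt b i₁ i₂ true false))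
      + (1 - σ i₁) *
        (σ i₂ * f (mgCnt b i₁ i₂ false true) + (1 - σ i₂) * f (mgCnt b i₁ i₂ false false)) := by
  classical
  set s : Finset (Fin N) := {i₁, i₂} with hs
  set s4 : Finset (Fin N → Bool) :=
    Finset.image (fun c : Bool × Bool => mgA b i₁ i₂ c.1 c.2) Finset.univ with hs4
  have hstep1 : mgEPay f σ i₁ =
      ∑ a ∈ s4, mgProb σ a * f ((Finset.univ.filter fun j => a j = a i₁).card) := by
    refine (Finset.sum_subset (Finset.subset_univ s4) ?_).symm
    intro a _ ha
    have : ∃ j, j ∉ s ∧ a j ≠ b j := by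
      by_contra h
      push_neg at h
      apply ha
      rw [hs4, Finset.mem_image]
      refine ⟨(a i₁, a i₂), Finset.mem_univ _, ?_⟩
      funext j
      by_cases hj2 : j = i₂
      · subst hj2; simp [mgA_at2]
      · by_cases hj1 : j = i₁
        · subst hj1; simp [mgA_at1 b hne]
        · rw [mgA_other b hj1 hj2]
          exact (h j (by simp [hs, hj1, hj2])).symm
    obtain ⟨j, hj, hja⟩ := this
    rw [mgProb_eq_zero σ b s hdet a j hj hja, zero_mul]
  have hinj : ∀ c ∈ (Finset.univ : Finset (Bool × Bool)), ∀ d ∈ Finset.univ,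
      mgA b i₁ i₂ c.1 c.2 = mgA b i₁ i₂ d.1 d.2 → c = d := by
    intro c _ d _ hcd
    have e1 := congrFun hcd i₁
    have e2 := congrFun hcd i₂
    rw [mgA_at1 b hne, mgA_at1 b hne] at e1
    rw [mgA_at2, mgA_at2] at e2
    exact Prod.ext e1 e2
  rw [hstep1, hs4, Finset.sum_image hinj]
  have hterm : ∀ c₀ c₁ : Bool,
      mgProb σ (mgA b i₁ i₂ c₀ c₁) *
        f ((Finset.univ.filter fun j => mgA b i₁ i₂ c₀ c₁ j = mgA b i₁ i₂ c₀ c₁ i₁).card) =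
      (if c₀ then σ i₁ else 1 - σ i₁) * ((if c₁ then σ i₂ else 1 - σ i₂) *
        f (mgCnt b i₁ i₂ c₀ c₁)) := by
    intro c₀ c₁
    have hconf : ∀ j, j ∉ s → mgA b i₁ i₂ c₀ c₁ j = b j := by
      intro j hj
      simp only [hs, Finset.mem_insert, Finset.mem_singleton, not_or] at hj
      exact mgA_other b hj.1 hj.2 c₀ c₁
    rw [mgProb_conform σ b s hdet _ hconf, hs, Finset.prod_pair hne,
      mgA_at1 b hne, mgA_at2]
    simp only [mgCnt]
    ring
  rw [Fintype.sum_prod_type]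
  simp only [Fintype.sum_bool]
  rw [hterm true true, hterm true false, hterm false true, hterm false false]
  simp only [if_true]
  norm_num
  ring

/-- There is no Nash equilibrium of the minority game with exactly two mixers. -/
theorem stmt_11 (k : ℕ) (f : ℕ → ℝ) (hf : StrictAntiOn f (Set.Icc 1 (2 * k + 1)))
    (σ : Fin (2 * k + 1) → ℝ) (hNE : mgMixedNE f σ) :
    (Finset.univ.filter fun i => 0 < σ i ∧ σ i < 1).card ≠ 2 := by
  classical
  intro hcard
  obtain ⟨i₁, i₂, hne, hpair⟩ := Finset.card_eq_two.mp hcard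
  have hmem1 : 0 < σ i₁ ∧ σ i₁ < 1 := by
    have h : i₁ ∈ Finset.univ.filter (fun i => 0 < σ i ∧ σ i < 1) := by rw [hpair]; simp
    exact (Finset.mem_filter.mp h).2
  have hmem2 : 0 < σ i₂ ∧ σ i₂ < 1 := by
    have h : i₂ ∈ Finset.univ.filter (fun i => 0 < σ i ∧ σ i < 1) := by rw [hpair]; simp
    exact (Finset.mem_filter.mp h).2
  set b : Fin (2 * k + 1) → Bool := fun j => decide (σ j = 1) with hb
  have hdet : ∀ j, j ∉ ({i₁, i₂} : Finset (Fin (2 * k + 1))) →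
      σ j = if b j then 1 else 0 := by
    intro j hj
    have hnot : ¬(0 < σ j ∧ σ j < 1) := by
      intro hcon
      have : j ∈ Finset.univ.filter (fun i => 0 < σ i ∧ σ i < 1) :=
        Finset.mem_filter.mpr ⟨Finset.mem_univ _, hcon⟩
      rw [hpair] at this
      exact hj this
    have h01 := hNE.1 j
    have h0or1 : σ j = 0 ∨ σ j = 1 := by
      by_contra h
      push_neg at h
      exact hnot ⟨lt_of_le_of_ne h01.1 (Ne.symm h.1), lt_of_le_of_ne h01.2 h.2⟩
    rcases h0or1 with h0 | h1
    · simp [hb, h0]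
    · simp [hb, h1]
  set S : Finset (Fin (2 * k + 1)) := Finset.univ \ {i₁, i₂} with hS
  set L : ℕ := (S.filter fun j => b j = true).card with hL
  set R : ℕ := (S.filter fun j => b j = false).card with hR
  have hk : 1 ≤ k := by
    have h2 : ({i₁, i₂} : Finset (Fin (2 * k + 1))).card ≤
        Fintype.card (Fin (2 * k + 1)) := Finset.card_le_univ _
    rw [Finset.card_pair hne, Fintype.card_fin] at h2
    omega
  have hcardS : S.card = 2 * k - 1 := by
    rw [hS, Finset.card_sdiff_of_subset (Finset.subset_univ _), Finset.card_pair hne]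
    simp
  have hLR : L + R = 2 * k - 1 := by
    rw [hL, hR, ← hcardS]
    have heq : (S.filter fun j => b j = false) = (S.filter fun j => ¬ b j = true) := by
      apply Finset.filter_congr
      intro j _
      simp [Bool.not_eq_true]
    rw [heq]
    exact Finset.card_filter_add_card_filter_not _
  -- the four counts
  have ctt : mgCnt b i₁ i₂ true true = L + 2 := by
    rw [mgCnt_val b hne]; simp [hL, hS]
  have ctf : mgCnt b i₁ i₂ true false = L + 1 := by
    rw [mgCnt_val b hne]; simp [hL, hS]
  have cft : mgCnt b i₁ i₂ false true = R + 1 := by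
    rw [mgCnt_val b hne]; simp [hR, hS]
  have cff : mgCnt b i₁ i₂ false false = R + 2 := by
    rw [mgCnt_val b hne]; simp [hR, hS]
  set p : ℝ := σ i₂ with hp
  set X : ℝ := p * f (L + 2) + (1 - p) * f (L + 1) with hX
  set Y : ℝ := p * f (R + 1) + (1 - p) * f (R + 2) with hY
  have hkey : ∀ τ : ℝ, mgEPay f (Function.update σ i₁ τ) i₁ = τ * X + (1 - τ) * Y := by
    intro τ
    have hdet' : ∀ j, j ∉ ({i₁, i₂} : Finset (Fin (2 * k + 1))) →
        Function.update σ i₁ τ j = if b j then 1 else 0 := by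
      intro j hj
      have hj1 : j ≠ i₁ := by
        intro h; subst h; exact hj (by simp)
      rw [Function.update_of_ne hj1]
      exact hdet j hj
    rw [mgEPay_two f _ b hne hdet', Function.update_self,
      Function.update_of_ne (Ne.symm hne), ctt, ctf, cft, cff, hX, hY, hp]
  have hE : mgEPay f σ i₁ = σ i₁ * X + (1 - σ i₁) * Y := by
    conv_lhs => rw [← Function.update_eq_self i₁ σ]
    exact hkey (σ i₁)
  have hup1 := hNE.2 i₁ 1 zero_le_one le_rfl
  have hup0 := hNE.2 i₁ 0 le_rfl zero_le_one
  rw [hkey 1, hE] at hup1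
  rw [hkey 0, hE] at hup0
  have hq0 := hmem1.1
  have hq1 := hmem1.2
  have hXY : X = Y := by
    have h1 : X ≤ Y := by nlinarith
    have h2 : Y ≤ X := by nlinarith
    linarith
  have hp0 := hmem2.1
  have hp1 := hmem2.2
  have hLb : L ≤ 2 * k - 1 := by omega
  have hRb : R ≤ 2 * k - 1 := by omega
  have hfmono : ∀ m n : ℕ, 1 ≤ m → n ≤ 2 * k + 1 → m ≤ n → f n ≤ f m := by
    intro m n h1 h2 hmn
    rcases eq_or_lt_of_le hmn with h | h
    · rw [h]
    · exact le_of_lt (hf ⟨h1, by omega⟩ ⟨by omega, h2⟩ h)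
  rcases Nat.lt_or_ge L R with hlt | hge
  · -- R ≥ L + 1
    have hfa : f (R + 2) < f (L + 1) :=
      hf ⟨by omega, by omega⟩ ⟨by omega, by omega⟩ (by omega)
    have hfb : f (R + 1) ≤ f (L + 2) := hfmono (L + 2) (R + 1) (by omega) (by omega) (by omega)
    rw [hX, hY] at hXY
    nlinarith
  · -- L ≥ R + 1 (L ≠ R since L + R is odd)
    have hlt' : R < L := by omega
    have hfa : f (L + 2) < f (R + 1) :=
      hf ⟨by omega, by omega⟩ ⟨by omega, by omega⟩ (by omega)
    have hfb : f (L + 1) ≤ f (R + 2) := hfmono (R + 2) (L + 1) (by omega) (by omega) (by omega)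
    rw [hX, hY] at hXY
    nlinarith
end

section
/- In the minority game with 2k+1 players, any two pure Nash equilibria can be connected by a finite chain of pure Nash equilibria in which consecutive profiles differ in exactly one player's action. -/
/-!
Since `f` is strictly decreasing, a player prefers to deviate exactly when the deviation makes
his group smaller, so a pure profile of `2k+1` players is an equilibrium iff each action is
chosen by at most `k+1` players. Given equilibria `x ≠ y`, let `b` be the minority action of `x`
(chosen by at most `k` players); some player plays `b` in `y` but not in `x`, and switching
him to `b` gives an equilibrium one step closer to `y` in Hamming distance.
-/

open Finset

section Hamming

variable {ι : Type*} {β : ι → Type*} [Fintype ι] [DecidableEq ι] [∀ i, DecidableEq (β i)]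

theorem hammingDist_update_right_of_ne {x : ∀ i, β i} {i : ι} {v : β i} (h : x i ≠ v) :
    hammingDist x (Function.update x i v) = 1 := by
  rw [hammingDist, card_eq_one]
  refine ⟨i, ?_⟩
  ext j
  rcases eq_or_ne j i with rfl | hj <;> simp [*]

theorem hammingDist_update_add_one {x y : ∀ i, β i} {i : ι} (h : x i ≠ y i) :
    hammingDist (Function.update x i (y i)) y + 1 = hammingDist x y := by
  have hfilter : (univ.filter fun j => Function.update x i (y i) j ≠ y j) =
      (univ.filter fun j => x j ≠ y j).erase i := by
    ext j
    rcases eq_or_ne j i with rfl | hj <;> simp [*]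
  rw [hammingDist, hammingDist, hfilter, card_erase_add_one (by simpa using h)]

end Hamming

theorem exists_chain_of_descent {α : Type*} (P : α → Prop) (R : α → α → Prop)
    (d : α → ℕ) (y : α) (step : ∀ x, P x → x ≠ y → ∃ x', P x' ∧ R x x' ∧ d x' < d x)
    (x : α) (hx : P x) :
    ∃ (n : ℕ) (c : ℕ → α), c 0 = x ∧ c n = y ∧ (∀ m ≤ n, P (c m)) ∧
      ∀ m < n, R (c m) (c (m + 1)) := by
  induction hd : d x using Nat.strong_induction_on generalizing x with
  | _ d ih =>
    by_cases hxy : x = y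
    · exact ⟨0, fun _ => x, rfl, hxy, fun _ _ => hx, fun _ h => absurd h (Nat.not_lt_zero _)⟩
    obtain ⟨x', hx', hR, hlt⟩ := step x hx hxy
    obtain ⟨n, c, hc0, hcn, hP, hc⟩ := ih _ (hd ▸ hlt) x' hx' rfl
    refine ⟨n + 1, fun m => if m = 0 then x else c (m - 1), by simp, by simpa using hcn, ?_, ?_⟩
    · rintro (_ | m) hm
      · simpa using hx
      · simpa using hP m (by omega)
    · rintro (_ | m) hm
      · simpa [hc0] using hR
      · simpa using hc m (by omega)

section Bool

variable {ι : Type*} [Fintype ι]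

theorem card_filter_eq_add_card_filter_eq_not (a : ι → Bool) (b : Bool) :
    #{j | a j = b} + #{j | a j = !b} = Fintype.card ι := by
  simpa [Bool.eq_not] using card_filter_add_card_filter_not (s := univ) (fun j => a j = b)

theorem card_filter_update_eq_of_ne [DecidableEq ι] {a : ι → Bool} {i : ι} {b : Bool}
    (h : a i ≠ b) :
    #{j | Function.update a i b j = b} = #{j | a j = b} + 1 := by
  have hfilter : (univ.filter fun j => Function.update a i b j = b) =
      insert i (univ.filter fun j => a j = b) := by
    ext j
    rcases eq_or_ne j i with rfl | hj <;> simp [*]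
  rw [hfilter, card_insert_of_notMem (by simpa using h)]

def IsNearlyBalanced (a : ι → Bool) : Prop :=
  ∀ b, 2 * #{j | a j = b} ≤ Fintype.card ι + 1

theorem IsNearlyBalanced.exists_update_of_ne [DecidableEq ι] (hodd : Odd (Fintype.card ι))
    {x y : ι → Bool} (hx : IsNearlyBalanced x) (hy : IsNearlyBalanced y) (hxy : x ≠ y) :
    ∃ i, x i ≠ y i ∧ IsNearlyBalanced (Function.update x i (y i)) := by
  obtain ⟨m, hm⟩ := hodd
  obtain ⟨b, hb⟩ : ∃ b, #{j | x j = b} ≤ m := by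
    by_contra! h
    have := card_filter_eq_add_card_filter_eq_not x true
    simp only [Bool.not_true] at this
    linarith [h true, h false]
  have hxb := card_filter_eq_add_card_filter_eq_not x b
  have hyb := card_filter_eq_add_card_filter_eq_not y b
  have hxb' := hx (!b)
  have hyb' := hy (!b)
  -- otherwise the `b`-players of `y`, at least `m` of them, would be exactly those of `x`
  obtain ⟨i, hxi, hyi⟩ : ∃ i, x i ≠ b ∧ y i = b := by
    by_contra! h
    have hsub : (univ.filter fun j => y j = b) ⊆ univ.filter fun j => x j = b := by
      intro j
      simpa using not_imp_not.1 (h j)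
    have heq := eq_of_subset_of_card_le hsub (by omega)
    refine hxy (funext fun j => ?_)
    have hj : y j = b ↔ x j = b := by simpa using congrArg (j ∈ ·) heq
    cases hxj : x j <;> cases hyj : y j <;> cases b <;> simp_all
  subst hyi
  refine ⟨i, hxi, fun c => ?_⟩
  have hx'b := card_filter_update_eq_of_ne hxi
  have hx'sum := card_filter_eq_add_card_filter_eq_not (Function.update x i (y i)) (y i)
  obtain rfl | rfl : c = y i ∨ c = !y i := by cases c <;> cases y i <;> simp
  · omega
  · omega

end Bool

theorem mgPayoff_update_not_le_iff {f : ℕ → ℝ} {N : ℕ} (hf : StrictAntiOn f (Set.Icc 1 N))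
    (a : Fin N → Bool) (i : Fin N) :
    mgPayoff f (Function.update a i (!a i)) i ≤ mgPayoff f a i ↔
      2 * #{j | a j = a i} ≤ N + 1 := by
  have hflip := card_filter_update_eq_of_ne (Bool.not_ne_self (a i)).symm
  have hsum := card_filter_eq_add_card_filter_eq_not a (a i)
  have hpos : 0 < #{j | a j = a i} := card_pos.2 ⟨i, by simp⟩
  simp only [Fintype.card_fin] at hsum
  unfold mgPayoff
  rw [Function.update_self, hflip,
    hf.le_iff_ge ⟨by omega, by omega⟩ ⟨hpos, by omega⟩]
  omega

theorem mgPureNE_iff_isNearlyBalanced {f : ℕ → ℝ} {N : ℕ} (hf : StrictAntiOn f (Set.Icc 1 N))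
    (a : Fin N → Bool) : mgPureNE f a ↔ IsNearlyBalanced a := by
  simp only [mgPureNE, mgPayoff_update_not_le_iff hf, IsNearlyBalanced, Fintype.card_fin]
  refine ⟨fun h b => ?_, fun h i => h (a i)⟩
  by_cases hb : ∃ i, a i = b
  · obtain ⟨i, rfl⟩ := hb
    exact h i
  · simp [filter_false_of_mem fun j _ hj => hb ⟨j, hj⟩]

/-- Any two pure Nash equilibria of the minority game are connected by a finite
chain of pure Nash equilibria in which consecutive profiles differ in exactly
one player's action. -/
theorem stmt_13 (k : ℕ) (f : ℕ → ℝ) (hf : StrictAntiOn f (Set.Icc 1 (2 * k + 1)))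
    (x y : Fin (2 * k + 1) → Bool) (hx : mgPureNE f x) (hy : mgPureNE f y) :
    ∃ (n : ℕ) (c : ℕ → Fin (2 * k + 1) → Bool),
      c 0 = x ∧ c n = y ∧ (∀ m ≤ n, mgPureNE f (c m)) ∧
        ∀ m < n, (Finset.univ.filter fun j => c m j ≠ c (m + 1) j).card = 1 := by
  refine exists_chain_of_descent (mgPureNE f) (fun a a' => hammingDist a a' = 1)
    (hammingDist · y) y (fun x' hx' hx'y => ?_) x hx
  simp only [mgPureNE_iff_isNearlyBalanced hf] at hx' hy ⊢
  obtain ⟨i, hi, hbal⟩ := hx'.exists_update_of_ne (by simp) hy hx'y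
  refine ⟨_, hbal, hammingDist_update_right_of_ne hi, ?_⟩
  have := hammingDist_update_add_one hi
  omega
end

section
/- For the replicator dynamic of a finite exact potential game, the (mixed extension of the) potential function U is a strict Lyapunov function: along any solution trajectory α(t), dU(α(t))/dt = ∑_{i∈N} Var_{α_i}[U(·, α_{-i})] ≥ 0, with equality exactly at stationary states of the dynamic. -/
/-!
Multilinearity of the mixed extension does all the work. Differentiating `gMix U (α t)` gives
`∑ i ∑ aᵢ α̇ᵢ(aᵢ) U(aᵢ, α₋ᵢ)`. Since `uᵢ - U` does not depend on `aᵢ`, player `i` compares pure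
strategies by `U` exactly as by `uᵢ`, so the replicator field of the game is that of the
identical-interest game `(U, …, U)`. With `α̇ᵢ(aᵢ) = αᵢ(aᵢ)(U(aᵢ, α₋ᵢ) - U(α))` the `i`-th summand
becomes `E[U(·, α₋ᵢ)²] - E[U(·, α₋ᵢ)]²`, a variance; it vanishes iff `U(aᵢ, α₋ᵢ) = U(α)` on the
support of `αᵢ`, i.e. iff the replicator field vanishes in coordinate `i`.
-/

open Finset

/-- Multilinear mixed extension of a function on pure profiles. -/
noncomputable def gMix {ι : Type*} [Fintype ι] [DecidableEq ι] {A : ι → Type*}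
    [∀ i, Fintype (A i)] (v : (∀ j, A j) → ℝ) (x : ∀ i, A i → ℝ) : ℝ :=
  ∑ a : ∀ j, A j, (∏ j, x j (a j)) * v a

/-- The mixed strategy putting all mass on the pure strategy `ai`. -/
noncomputable def gPure {ι : Type*} {A : ι → Type*} [∀ i, DecidableEq (A i)]
    (i : ι) (ai : A i) : A i → ℝ :=
  fun b => if b = ai then 1 else 0

/-- Payoff to player `i` from pure strategy `ai` against the mixed profile `x`. -/
noncomputable def gPayP {ι : Type*} [Fintype ι] [DecidableEq ι] {A : ι → Type*}
    [∀ i, Fintype (A i)] [∀ i, DecidableEq (A i)]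
    (u : ι → (∀ j, A j) → ℝ) (x : ∀ i, A i → ℝ) (i : ι) (ai : A i) : ℝ :=
  gMix (u i) (Function.update x i (gPure i ai))

/-- The replicator vector field: ẋᵢ(aᵢ) = xᵢ(aᵢ)(uᵢ(aᵢ,x₋ᵢ) - uᵢ(x)). -/
noncomputable def gRepl {ι : Type*} [Fintype ι] [DecidableEq ι] {A : ι → Type*}
    [∀ i, Fintype (A i)] [∀ i, DecidableEq (A i)]
    (u : ι → (∀ j, A j) → ℝ) (x : ∀ i, A i → ℝ) (i : ι) (ai : A i) : ℝ :=
  x i ai * (gPayP u x i ai - gMix (u i) x)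

/-- The variance of aᵢ ↦ U(aᵢ, x₋ᵢ) under the distribution xᵢ. -/
noncomputable def gVar {ι : Type*} [Fintype ι] [DecidableEq ι] {A : ι → Type*}
    [∀ i, Fintype (A i)] [∀ i, DecidableEq (A i)]
    (U : (∀ j, A j) → ℝ) (x : ∀ i, A i → ℝ) (i : ι) : ℝ :=
  (∑ ai : A i, x i ai * (gPayP (fun _ => U) x i ai) ^ 2) -
    (∑ ai : A i, x i ai * gPayP (fun _ => U) x i ai) ^ 2

def IsExactPotential {ι : Type*} [DecidableEq ι] {A : ι → Type*}
    (u : ι → (∀ j, A j) → ℝ) (U : (∀ j, A j) → ℝ) : Prop :=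
  ∀ (i : ι) (a : ∀ j, A j) (b : A i),
    u i (Function.update a i b) - u i a = U (Function.update a i b) - U a

section MixedExtension

variable {ι : Type*} [Fintype ι] [DecidableEq ι] {A : ι → Type*}

lemma prod_update_apply (x : ∀ i, A i → ℝ) (i : ι) (p : A i → ℝ) (a : ∀ j, A j) :
    ∏ j, Function.update x i p j (a j) = p (a i) * ∏ j ∈ univ.erase i, x j (a j) := by
  rw [← mul_prod_erase univ _ (mem_univ i), Function.update_self]
  congr 1
  exact prod_congr rfl fun j hj => by rw [Function.update_of_ne (ne_of_mem_erase hj)]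

variable [∀ i, Fintype (A i)]

lemma gMix_update (v : (∀ j, A j) → ℝ) (x : ∀ i, A i → ℝ) (i : ι) (p : A i → ℝ) :
    gMix v (Function.update x i p) =
      ∑ a, p (a i) * ((∏ j ∈ univ.erase i, x j (a j)) * v a) := by
  simp only [gMix, prod_update_apply, mul_assoc]

lemma gMix_sub (v w : (∀ j, A j) → ℝ) (x : ∀ i, A i → ℝ) :
    gMix (fun a => v a - w a) x = gMix v x - gMix w x := by
  simp only [gMix, mul_sub, sum_sub_distrib]

lemma hasDerivAt_gMix (v : (∀ j, A j) → ℝ) {α : ℝ → ∀ i, A i → ℝ} {α' : ∀ i, A i → ℝ}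
    {t : ℝ} (h : ∀ i ai, HasDerivAt (fun s => α s i ai) (α' i ai) t) :
    HasDerivAt (fun s => gMix v (α s)) (∑ i, gMix v (Function.update (α t) i (α' i))) t := by
  have hterm (a : ∀ j, A j) : HasDerivAt (fun s => (∏ j, α s j (a j)) * v a)
      ((∑ i, (∏ j ∈ univ.erase i, α t j (a j)) * α' i (a i)) * v a) t := by
    simpa only [smul_eq_mul] using
      (HasDerivAt.fun_finsetProd fun j _ => h j (a j)).mul_const (v a)
  refine (HasDerivAt.fun_sum (u := univ) fun a _ => hterm a).congr_deriv ?_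
  simp_rw [gMix_update, sum_mul]
  rw [sum_comm]
  exact sum_congr rfl fun i _ => sum_congr rfl fun a _ => by ring

variable [∀ i, DecidableEq (A i)]

lemma sum_mul_gMix_update_gPure (v : (∀ j, A j) → ℝ) (x : ∀ i, A i → ℝ) (i : ι)
    (p : A i → ℝ) :
    ∑ ai, p ai * gMix v (Function.update x i (gPure i ai)) = gMix v (Function.update x i p) := by
  simp_rw [gMix_update, mul_sum]
  rw [sum_comm]
  refine sum_congr rfl fun a _ => ?_
  simp [gPure]

lemma gMix_eq_sum_mul_gMix_update_gPure (v : (∀ j, A j) → ℝ) (x : ∀ i, A i → ℝ) (i : ι) :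
    gMix v x = ∑ ai, x i ai * gMix v (Function.update x i (gPure i ai)) := by
  rw [sum_mul_gMix_update_gPure, Function.update_eq_self]

lemma sum_mul_gPayP_eq_gMix (v : (∀ j, A j) → ℝ) (x : ∀ i, A i → ℝ) (i : ι) :
    ∑ ai, x i ai * gPayP (fun _ => v) x i ai = gMix v x :=
  (gMix_eq_sum_mul_gMix_update_gPure v x i).symm

end MixedExtension

section PotentialGame

variable {ι : Type*} [Fintype ι] [DecidableEq ι] {A : ι → Type*}
  [∀ i, Fintype (A i)] [∀ i, DecidableEq (A i)]

lemma sum_gPure_mul_eq_of_update_invariant (w : (∀ j, A j) → ℝ) (i : ι)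
    (hw : ∀ (a : ∀ j, A j) (b : A i), w (Function.update a i b) = w a) (ai bi : A i) :
    ∑ a, gPure i ai (a i) * w a = ∑ a, gPure i bi (a i) * w a := by
  have hσ : Function.Involutive fun a : ∀ j, A j => Function.update a i (Equiv.swap ai bi (a i)) :=
    fun a => by simp
  rw [← Equiv.sum_comp hσ.toPerm]
  refine sum_congr rfl fun a _ => ?_
  simp only [Function.Involutive.coe_toPerm, Function.update_self, hw, gPure,
    Equiv.swap_apply_eq_iff, Equiv.swap_apply_left]

lemma gMix_update_gPure_eq_gMix_of_update_invariant (f : (∀ j, A j) → ℝ)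
    {x : ∀ i, A i → ℝ} {i : ι} (hx : ∑ bi, x i bi = 1)
    (hf : ∀ (a : ∀ j, A j) (b : A i), f (Function.update a i b) = f a) (ai : A i) :
    gMix f (Function.update x i (gPure i ai)) = gMix f x := by
  have hw (a : ∀ j, A j) (b : A i) :
      (∏ j ∈ univ.erase i, x j (Function.update a i b j)) * f (Function.update a i b) =
        (∏ j ∈ univ.erase i, x j (a j)) * f a := by
    rw [hf]
    congr 1
    exact prod_congr rfl fun j hj => by rw [Function.update_of_ne (ne_of_mem_erase hj)]
  have hpure (bi : A i) : gMix f (Function.update x i (gPure i bi)) =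
      gMix f (Function.update x i (gPure i ai)) := by
    simp only [gMix_update]
    exact sum_gPure_mul_eq_of_update_invariant _ i hw bi ai
  rw [gMix_eq_sum_mul_gMix_update_gPure f x i]
  simp_rw [hpure, ← sum_mul, hx, one_mul]

lemma gRepl_eq_gRepl_potential {u : ι → (∀ j, A j) → ℝ} {U : (∀ j, A j) → ℝ}
    (hpot : IsExactPotential u U) {x : ∀ i, A i → ℝ} {i : ι} (hx : ∑ bi, x i bi = 1) :
    gRepl u x i = gRepl (fun _ => U) x i := by
  have hinv (a : ∀ j, A j) (b : A i) :
      u i (Function.update a i b) - U (Function.update a i b) = u i a - U a := by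
    linarith [hpot i a b]
  funext ai
  have h := gMix_update_gPure_eq_gMix_of_update_invariant (fun a => u i a - U a) hx hinv ai
  rw [gMix_sub, gMix_sub] at h
  rw [gRepl, gRepl]
  congr 1
  simp only [gPayP]
  linarith

end PotentialGame

section Variance

variable {ι : Type*} [Fintype ι] [DecidableEq ι] {A : ι → Type*}
  [∀ i, Fintype (A i)] [∀ i, DecidableEq (A i)]

lemma gVar_eq_gMix_update_gRepl (U : (∀ j, A j) → ℝ) (x : ∀ i, A i → ℝ) (i : ι) :
    gVar U x i = gMix U (Function.update x i (gRepl (fun _ => U) x i)) := by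
  have hexpand (ai : A i) : gRepl (fun _ => U) x i ai * gMix U (Function.update x i (gPure i ai)) =
      x i ai * gPayP (fun _ => U) x i ai ^ 2 - gMix U x * (x i ai * gPayP (fun _ => U) x i ai) := by
    simp only [gRepl, gPayP]
    ring
  rw [← sum_mul_gMix_update_gPure]
  simp_rw [gVar, hexpand, sum_sub_distrib, ← mul_sum, sum_mul_gPayP_eq_gMix]
  ring

lemma gVar_eq_sum_mul_sq (U : (∀ j, A j) → ℝ) {x : ∀ i, A i → ℝ} {i : ι}
    (hx : ∑ ai, x i ai = 1) :
    gVar U x i = ∑ ai, x i ai * (gPayP (fun _ => U) x i ai - gMix U x) ^ 2 := by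
  have hexpand (ai : A i) : x i ai * (gPayP (fun _ => U) x i ai - gMix U x) ^ 2 =
      x i ai * gPayP (fun _ => U) x i ai ^ 2
        - 2 * gMix U x * (x i ai * gPayP (fun _ => U) x i ai) + gMix U x ^ 2 * x i ai := by
    ring
  simp_rw [gVar, hexpand, sum_add_distrib, sum_sub_distrib, ← mul_sum, sum_mul_gPayP_eq_gMix, hx]
  ring

lemma gVar_nonneg (U : (∀ j, A j) → ℝ) {x : ∀ i, A i → ℝ} {i : ι}
    (hx₀ : ∀ ai, 0 ≤ x i ai) (hx : ∑ ai, x i ai = 1) : 0 ≤ gVar U x i := by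
  rw [gVar_eq_sum_mul_sq U hx]
  exact sum_nonneg fun ai _ => mul_nonneg (hx₀ ai) (sq_nonneg _)

lemma gVar_eq_zero_iff (U : (∀ j, A j) → ℝ) {x : ∀ i, A i → ℝ} {i : ι}
    (hx₀ : ∀ ai, 0 ≤ x i ai) (hx : ∑ ai, x i ai = 1) :
    gVar U x i = 0 ↔ ∀ ai, gRepl (fun _ => U) x i ai = 0 := by
  rw [gVar_eq_sum_mul_sq U hx,
    Fintype.sum_eq_zero_iff_of_nonneg fun ai => mul_nonneg (hx₀ ai) (sq_nonneg _), funext_iff]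
  simp [gRepl]

end Variance

theorem stmt_15_general {ι : Type*} [Fintype ι] [DecidableEq ι] (A : ι → Type*)
    [∀ i, Fintype (A i)] [∀ i, DecidableEq (A i)]
    (u : ι → (∀ j, A j) → ℝ) (U : (∀ j, A j) → ℝ)
    (hpot : ∀ (i : ι) (a : ∀ j, A j) (b : A i),
      u i (Function.update a i b) - u i a = U (Function.update a i b) - U a)
    (α : ℝ → ∀ i, A i → ℝ)
    (hprob : ∀ t i, (∀ ai, 0 ≤ α t i ai) ∧ (∑ ai : A i, α t i ai) = 1)
    (htraj : ∀ (t : ℝ) (i : ι) (ai : A i),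
      HasDerivAt (fun s => α s i ai) (gRepl u (α t) i ai) t) :
    ∀ t : ℝ,
      HasDerivAt (fun s => gMix U (α s)) (∑ i, gVar U (α t) i) t ∧
      0 ≤ ∑ i, gVar U (α t) i ∧
      ((∑ i, gVar U (α t) i) = 0 ↔ ∀ (i : ι) (ai : A i), gRepl u (α t) i ai = 0) := by
  intro t
  have hrepl (i : ι) : gRepl u (α t) i = gRepl (fun _ => U) (α t) i :=
    gRepl_eq_gRepl_potential hpot (hprob t i).2
  have hvar_nonneg (i : ι) : 0 ≤ gVar U (α t) i := gVar_nonneg U (hprob t i).1 (hprob t i).2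
  refine ⟨?_, Fintype.sum_nonneg hvar_nonneg, ?_⟩
  · simpa only [hrepl, ← gVar_eq_gMix_update_gRepl] using hasDerivAt_gMix U (htraj t)
  · rw [Fintype.sum_eq_zero_iff_of_nonneg hvar_nonneg, funext_iff]
    simp only [Pi.zero_apply, gVar_eq_zero_iff U (hprob t _).1 (hprob t _).2, hrepl]

/-- For the replicator dynamic of a finite exact potential game, the mixed
extension of the potential U is a strict Lyapunov function: along any solution
trajectory, dU(α(t))/dt equals the sum over players of the variance of
U(·, α₋ᵢ(t)) under αᵢ(t), which is nonnegative, and vanishes exactly at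
stationary states of the dynamic. -/
theorem stmt_15 {ι : Type*} [Fintype ι] [DecidableEq ι] (A : ι → Type*)
    [∀ i, Fintype (A i)] [∀ i, DecidableEq (A i)] [∀ i, Nonempty (A i)]
    (u : ι → (∀ j, A j) → ℝ) (U : (∀ j, A j) → ℝ)
    (hpot : ∀ (i : ι) (a : ∀ j, A j) (b : A i),
      u i (Function.update a i b) - u i a = U (Function.update a i b) - U a)
    (α : ℝ → ∀ i, A i → ℝ)
    (hprob : ∀ t i, (∀ ai, 0 ≤ α t i ai) ∧ (∑ ai : A i, α t i ai) = 1)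
    (htraj : ∀ (t : ℝ) (i : ι) (ai : A i),
      HasDerivAt (fun s => α s i ai) (gRepl u (α t) i ai) t) :
    ∀ t : ℝ,
      HasDerivAt (fun s => gMix U (α s)) (∑ i, gVar U (α t) i) t ∧
      0 ≤ ∑ i, gVar U (α t) i ∧
      ((∑ i, gVar U (α t) i) = 0 ↔ ∀ (i : ι) (ai : A i), gRepl u (α t) i ai = 0) :=
  stmt_15_general A u U hpot α hprob htraj
end

section
/- For each β > 4, there exists p* ∈ (1/2, 1) such that p* = 1/(1 + exp(-β(1 - p* - r(p*,β)))) where r(p,β) = 1/(1 + exp(-β(1-2p))); hence (p*, p*, r(p*,β), β) is a logit quantal response equilibrium of the three-player minority game with p* = q* ∈ (1/2,1) and r < 1/2. -/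
set_option maxHeartbeats 1000000

private lemma aux_frac (u : ℝ) (hu : 0 < u) :
    1/(1+1/(1+u)) = (1+u)/(2+u) := by
  have h1 : (1:ℝ)+u ≠ 0 := by positivity
  have h3 : 1 + 1/(1+u) = (2+u)/(1+u) := by
    rw [eq_div_iff h1, add_mul, one_mul, one_div, inv_mul_cancel₀ h1]; ring
  rw [h3, one_div_div]

/-- For each β > 4 there is a logit QRE (p, p, r, β) of the three-player minority
game with p ∈ (1/2, 1) and r = 1/(1+exp(-β(1-2p))) < 1/2. -/
theorem stmt_17 (β : ℝ) (hβ : 4 < β) :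
    ∃ p r : ℝ, 1 / 2 < p ∧ p < 1 ∧
      r = 1 / (1 + Real.exp (-(β * (1 - p - p)))) ∧ r < 1 / 2 ∧
      p = 1 / (1 + Real.exp (-(β * (1 - p - r)))) := by
  have hβ0 : (0:ℝ) < β := by linarith
  set A : ℝ := β^2 - 2*β - 8 with hA
  set D : ℝ := β^3 + 32 with hD
  have hApos : 0 < A := by nlinarith
  have hDpos : 0 < D := by nlinarith
  set ε : ℝ := A / (2*D) with hε
  have hεpos : 0 < ε := by positivity
  have hε4 : ε < 1/4 := by
    rw [hε, div_lt_iff₀ (by positivity)]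
    nlinarith
  have hεD : ε * D = A/2 := by rw [hε]; field_simp
  have hkey : 4 + 16*ε < β*(β/2-1) - β^3*ε/2 := by nlinarith [hεD]
  set rfun : ℝ → ℝ := fun p => 1 / (1 + Real.exp (-(β * (1 - p - p)))) with hrfun
  set g : ℝ → ℝ := fun p => 1 / (1 + Real.exp (-(β * (1 - p - rfun p)))) with hgdef
  have hrc : Continuous rfun := by
    apply Continuous.div continuous_const
    · fun_prop
    · intro x; positivity
  have hgc : Continuous g := by
    apply Continuous.div continuous_const
    · fun_prop
    · intro x; positivity
  set p0 : ℝ := 1/2 + ε with hp0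
  have hE : 1 + 2*β*ε ≤ Real.exp (2*β*ε) := by
    have := Real.add_one_le_exp (2*β*ε); linarith
  have hr0le : rfun p0 ≤ 1/2 - β*ε/2 + β^2*ε^2/2 := by
    have h1 : rfun p0 = 1 / (1 + Real.exp (2*β*ε)) := by
      rw [hrfun]; simp only
      congr 2
      rw [hp0]; ring
    rw [h1]
    have h2 : (1:ℝ) / (1 + Real.exp (2*β*ε)) ≤ 1 / (2 + 2*β*ε) := by
      apply one_div_le_one_div_of_le (by positivity)
      linarith
    have h3 : (1:ℝ) / (2 + 2*β*ε) ≤ 1/2 - β*ε/2 + β^2*ε^2/2 := by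
      rw [div_le_iff₀ (by positivity)]
      nlinarith [pow_pos hεpos 3, pow_pos hβ0 3, mul_pos (mul_pos hβ0 hβ0) hβ0]
    linarith
  have hkey' : β * (β/2 - 1 - β^2*ε/2) = β*(β/2-1) - β^3*ε/2 := by ring
  have hfacpos : 0 < β/2 - 1 - β^2*ε/2 := by
    by_contra h
    push_neg at h
    nlinarith [mul_nonpos_of_nonneg_of_nonpos (le_of_lt hβ0) h]
  set S : ℝ := ε*(β/2 - 1 - β^2*ε/2) with hS
  have hSpos : 0 < S := by rw [hS]; positivity
  have hSeq : S = β*ε/2 - ε - β^2*ε^2/2 := by rw [hS]; ring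
  have hslb : S ≤ 1 - p0 - rfun p0 := by
    rw [hSeq, hp0]; linarith [hr0le]
  have hbS : ε*(4+16*ε) < β*S := by
    have h := mul_lt_mul_of_pos_left hkey hεpos
    rw [hS]; nlinarith [h]
  have hgp0 : p0 < g p0 := by
    have hF : Real.exp (-(β * (1 - p0 - rfun p0))) ≤ 1/(1+β*S) := by
      have h1 : Real.exp (-(β * (1 - p0 - rfun p0))) ≤ Real.exp (-(β*S)) := by
        apply Real.exp_le_exp.2; nlinarith
      have h2 : Real.exp (-(β*S)) ≤ 1/(1+β*S) := by
        rw [Real.exp_neg, ← one_div]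
        exact one_div_le_one_div_of_le (by positivity)
          (by have := Real.add_one_le_exp (β*S); linarith)
      linarith
    have hFpos : 0 < Real.exp (-(β * (1 - p0 - rfun p0))) := Real.exp_pos _
    set t : ℝ := β*S with ht
    have ht0 : 0 < t := by positivity
    have h3 : 1/(1 + 1/(1+t)) ≤ g p0 := by
      rw [hgdef]; simp only
      apply one_div_le_one_div_of_le (by positivity)
      have : (0:ℝ) < 1 + t := by linarith
      linarith [hF]
    have heq : 1/(1 + 1/(1+t)) = (1+t)/(2+t) := aux_frac t ht0
    have h4 : p0 < (1+t)/(2+t) := by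
      rw [hp0, lt_div_iff₀ (by positivity)]
      nlinarith [hbS, hε4, hεpos, mul_pos hεpos hεpos,
        mul_pos (mul_pos hεpos hεpos) hεpos]
    rw [heq] at h3
    exact lt_of_lt_of_le h4 h3
  have hg1 : g 1 < 1 := by
    have hr1 : 0 < rfun 1 := by rw [hrfun]; positivity
    have hE1 : 1 < Real.exp (-(β * (1 - 1 - rfun 1))) := by
      have : (0:ℝ) < -(β * (1 - 1 - rfun 1)) := by nlinarith
      calc (1:ℝ) = Real.exp 0 := Real.exp_zero.symm
        _ < _ := Real.exp_lt_exp.2 this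
    rw [hgdef]; simp only
    rw [div_lt_one (by positivity)]
    linarith
  -- IVT
  have hp01 : p0 ≤ 1 := by rw [hp0]; linarith
  set f : ℝ → ℝ := fun p => g p - p with hf
  have hfc : Continuous f := hgc.sub continuous_id
  have hmem : (0:ℝ) ∈ Set.Icc (f 1) (f p0) := by
    constructor
    · simp only [hf]; linarith
    · simp only [hf]; linarith
  obtain ⟨p, hpI, hfp⟩ := intermediate_value_Icc' hp01 hfc.continuousOn hmem
  have hgp : g p = p := by
    have : g p - p = 0 := hfp
    linarith
  have hp_half : 1/2 < p := by
    have := hpI.1; rw [hp0] at this; linarith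
  have hp_lt1 : p < 1 := by
    rcases lt_or_eq_of_le hpI.2 with h | h
    · exact h
    · exfalso; rw [h] at hgp; simp only [hf] at *; rw [hgp] at hg1; linarith
  refine ⟨p, rfun p, hp_half, hp_lt1, by rw [hrfun], ?_, ?_⟩
  · have hE2 : 1 < Real.exp (-(β * (1 - p - p))) := by
      have : (0:ℝ) < -(β * (1 - p - p)) := by nlinarith
      calc (1:ℝ) = Real.exp 0 := Real.exp_zero.symm
        _ < _ := Real.exp_lt_exp.2 this
    rw [hrfun]; simp only
    rw [div_lt_iff₀ (by positivity)]
    linarith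
  · exact hgp.symm
end

section
/- For each β > 4, there exists p* ∈ (1/2, 1) with p* = 1/(1 + exp(β(1/2 - p*))); hence (p*, 1-p*, 1/2, β) is a logit quantal response equilibrium of the three-player minority game. Moreover, for fixed p₀ ∈ (1/2,1), the map β ↦ 1/(1 + exp(β(1/2 - p₀))) is strictly increasing on (0,∞). -/
/-!
Writing `σ` for the logistic function, the symmetric profile `(p, 1 - p, 1/2)` is a logit QRE
exactly when `p = σ (β (p - 1/2))`, the remaining conditions following from `σ (-x) = 1 - σ x`
and `σ 0 = 1/2`. From `exp u > 1 + u` one gets `σ u > (u + 1) / (u + 2)`, which at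
`u = β/2 - 2` says that `p ↦ σ (β (p - 1/2))` lies above the diagonal at `p = 1 - 2/β > 1/2`;
as `σ < 1`, the intermediate value theorem gives a fixed point in `[1 - 2/β, 1)`.
Monotonicity in `β` is that of `σ`.
-/

open Real Set

lemma one_div_one_add_exp_neg_eq_sigmoid (x : ℝ) : 1 / (1 + exp (-x)) = sigmoid x := by
  rw [one_div, sigmoid_def]

lemma one_div_one_add_exp_mul_sub_eq_sigmoid (β c p : ℝ) :
    1 / (1 + exp (β * (c - p))) = sigmoid (β * (p - c)) := by
  rw [← one_div_one_add_exp_neg_eq_sigmoid, neg_mul_eq_mul_neg, neg_sub]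

lemma add_one_div_add_two_lt_sigmoid {u : ℝ} (hu : 0 < u) : (u + 1) / (u + 2) < sigmoid u := by
  have hexp : exp (-u) * (u + 1) < 1 := by
    rw [exp_neg, inv_mul_lt_iff₀ (exp_pos u), mul_one]
    linarith [add_one_lt_exp hu.ne']
  rw [← one_div_one_add_exp_neg_eq_sigmoid, div_lt_div_iff₀ (by linarith) (by positivity)]
  linarith

lemma exists_sigmoid_mul_sub_half_eq_self {β : ℝ} (hβ : 4 < β) :
    ∃ p ∈ Ioo (1 / 2 : ℝ) 1, sigmoid (β * (p - 1 / 2)) = p := by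
  have hβ0 : 0 < β := by linarith
  have h2β : 2 / β < 1 / 2 := by rw [div_lt_iff₀ hβ0]; linarith
  have h2β0 : 0 < 2 / β := by positivity
  have hstart : 1 - 2 / β ≤ sigmoid (β * (1 - 2 / β - 1 / 2)) := by
    have hu : β * (1 - 2 / β - 1 / 2) = β / 2 - 2 := by
      field_simp [hβ0.ne']
      ring
    have hval : (β / 2 - 2 + 1) / (β / 2 - 2 + 2) = 1 - 2 / β := by
      field_simp [hβ0.ne']
      ring
    rw [hu, ← hval]
    exact (add_one_div_add_two_lt_sigmoid (by linarith)).le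
  have hcont : ContinuousOn (fun p => sigmoid (β * (p - 1 / 2))) (Icc (1 - 2 / β) 1) := by
    fun_prop
  obtain ⟨p, ⟨hp, -⟩, hfix⟩ :=
    exists_mem_Icc_isFixedPt hcont (by linarith) hstart (sigmoid_le_one _)
  exact ⟨p, ⟨by linarith, hfix ▸ sigmoid_lt_one _⟩, hfix⟩

lemma strictMono_sigmoid_mul {c : ℝ} (hc : 0 < c) : StrictMono fun β => sigmoid (β * c) :=
  sigmoid_strictMono.comp (strictMono_mul_right_of_pos hc)

/-- For each β > 4 there is a logit QRE (p, 1-p, 1/2, β) of the three-player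
minority game with p ∈ (1/2, 1); moreover for fixed p₀ ∈ (1/2, 1) the map
β ↦ 1/(1 + exp(β(1/2 - p₀))) is strictly increasing on (0, ∞). -/
theorem stmt_18 :
    (∀ β : ℝ, 4 < β → ∃ p : ℝ, 1 / 2 < p ∧ p < 1 ∧
      p = 1 / (1 + Real.exp (β * (1 / 2 - p))) ∧
      p = 1 / (1 + Real.exp (-(β * (1 - (1 - p) - 1 / 2)))) ∧
      (1 - p) = 1 / (1 + Real.exp (-(β * (1 - p - 1 / 2)))) ∧
      (1 / 2 : ℝ) = 1 / (1 + Real.exp (-(β * (1 - p - (1 - p)))))) ∧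
    (∀ p₀ : ℝ, 1 / 2 < p₀ → p₀ < 1 →
      StrictMonoOn (fun β : ℝ => 1 / (1 + Real.exp (β * (1 / 2 - p₀)))) (Set.Ioi 0)) := by
  refine ⟨fun β hβ => ?_, fun p₀ hp₀ _ => ?_⟩
  · obtain ⟨p, ⟨hp_gt, hp_lt⟩, hfix⟩ := exists_sigmoid_mul_sub_half_eq_self hβ
    refine ⟨p, hp_gt, hp_lt, ?_, ?_, ?_, ?_⟩
    · rw [one_div_one_add_exp_mul_sub_eq_sigmoid, hfix]
    · rw [one_div_one_add_exp_neg_eq_sigmoid, show 1 - (1 - p) - 1 / 2 = p - 1 / 2 by ring, hfix]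
    · rw [one_div_one_add_exp_neg_eq_sigmoid, show β * (1 - p - 1 / 2) = -(β * (p - 1 / 2)) by ring,
        sigmoid_neg, hfix]
    · rw [sub_self, mul_zero, one_div_one_add_exp_neg_eq_sigmoid, sigmoid_zero]
      norm_num
  · simp_rw [one_div_one_add_exp_mul_sub_eq_sigmoid]
    exact (strictMono_sigmoid_mul (by linarith)).strictMonoOn _
end

section
/- Consider the deterministic best-reply dynamic with memory one in the minority game with 2k+1 players: if the profile played yesterday is not a pure Nash equilibrium, then each player's unique best reply today is the action chosen by the minority yesterday (strictly fewer than k+1 players), and starting from any non-equilibrium profile where action a is in strict majority, play cycles forever between the all-(−a) profile and the all-a profile, never reaching a Nash equilibrium. -/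
open Finset

lemma mg_split {N : ℕ} (a : Fin N → Bool) (b : Bool) (s : Finset (Fin N)) :
    (s.filter fun j => a j = b).card + (s.filter fun j => a j = !b).card = s.card := by
  have h : (s.filter fun j => a j = !b) = s.filter fun j => ¬ (a j = b) := by
    ext j; cases h1 : a j <;> cases b <;> simp [h1]
  rw [h, Finset.card_filter_add_card_filter_not]

lemma mg_card_filter_insert {α : Type*} [Fintype α] [DecidableEq α]
    (p : α → Prop) [DecidablePred p] (i : α) (hi : p i) :
    (univ.filter p).card = 1 + ((univ.erase i).filter p).card := by
  have h : (univ.filter p) = insert i ((univ.erase i).filter p) := by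
    ext j; by_cases hj : j = i <;> simp [hj, hi]
  rw [h, Finset.card_insert_of_notMem (by simp), Nat.add_comm]

lemma mg_card_update {N : ℕ} (a : Fin N → Bool) (i : Fin N) (x : Bool) :
    (univ.filter fun j => Function.update a i x j = Function.update a i x i).card
      = 1 + ((univ.erase i).filter fun j => a j = x).card := by
  rw [mg_card_filter_insert _ i (by simp)]
  have h2 : ((univ.erase i).filter fun j => Function.update a i x j = Function.update a i x i)
      = ((univ.erase i).filter fun j => a j = x) := by
    apply Finset.filter_congr
    intro j hj
    have hji : j ≠ i := (Finset.mem_erase.mp hj).1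
    simp [Function.update_of_ne hji]
  rw [h2]

lemma mg_card_self {N : ℕ} (a : Fin N → Bool) (i : Fin N) :
    (univ.filter fun j => a j = a i).card = 1 + ((univ.erase i).filter fun j => a j = a i).card :=
  mg_card_filter_insert _ i rfl

/-- Best-reply dynamics with memory one cycle forever. Suppose at time 0 the
profile is not a pure Nash equilibrium, with action `c` in strict majority
(chosen by more than k+1 players), and each player always plays a best reply to
the belief that the others repeat their last action. Then: (i) at time 0 each
player's unique best reply is the minority action `!c`; (ii) from time 1 on play
alternates between the all-`!c` and all-`c` profiles; and (iii) no profile along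
the trajectory is ever a pure Nash equilibrium. -/
theorem stmt_19 (k : ℕ) (f : ℕ → ℝ) (hf : StrictAntiOn f (Set.Icc 1 (2 * k + 1)))
    (a : ℕ → Fin (2 * k + 1) → Bool) (c : Bool)
    (hmaj : k + 1 < (Finset.univ.filter fun j => a 0 j = c).card)
    (hbr : ∀ (n : ℕ) (i : Fin (2 * k + 1)) (b : Bool),
      f (1 + ((Finset.univ.erase i).filter fun j => a n j = b).card) ≤
        f (1 + ((Finset.univ.erase i).filter fun j => a n j = a (n + 1) i).card)) :
    (∀ (i : Fin (2 * k + 1)) (b : Bool), b ≠ !c →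
      f (1 + ((Finset.univ.erase i).filter fun j => a 0 j = b).card) <
        f (1 + ((Finset.univ.erase i).filter fun j => a 0 j = !c).card)) ∧
    (∀ n : ℕ, 1 ≤ n → ∀ i, a n i = if n % 2 = 1 then !c else c) ∧
    (∀ n : ℕ, ¬ mgPureNE f (a n)) := by
  have hNe : ∀ i : Fin (2 * k + 1), (univ.erase i).card = 2 * k := by
    intro i
    rw [Finset.card_erase_of_mem (Finset.mem_univ i)]
    simp
  have hm_le : (univ.filter fun j => a 0 j = c).card ≤ 2 * k + 1 := by
    have h := Finset.card_filter_le (univ : Finset (Fin (2 * k + 1))) (fun j => a 0 j = c)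
    simpa using h
  have hk : 1 ≤ k := by omega
  -- global split at time 0
  have hglobal : (univ.filter fun j => a 0 j = c).card
      + (univ.filter fun j => a 0 j = !c).card = 2 * k + 1 := by
    have h := mg_split (a 0) c (univ : Finset (Fin (2 * k + 1)))
    simpa using h
  -- counts over erase i at time 0
  have hcount : ∀ i : Fin (2 * k + 1),
      k + 1 ≤ ((univ.erase i).filter fun j => a 0 j = c).card ∧
      ((univ.erase i).filter fun j => a 0 j = !c).card + 1 ≤ k := by
    intro i
    have hsum : ((univ.erase i).filter fun j => a 0 j = c).card
        + ((univ.erase i).filter fun j => a 0 j = !c).card = 2 * k := by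
      rw [mg_split (a 0) c (univ.erase i), hNe i]
    have hsub : ((univ.erase i).filter fun j => a 0 j = !c).card
        ≤ (univ.filter fun j => a 0 j = !c).card :=
      Finset.card_le_card (Finset.monotone_filter_left _ (Finset.erase_subset i univ))
    omega
  -- part (i)
  have key : ∀ i : Fin (2 * k + 1),
      f (1 + ((univ.erase i).filter fun j => a 0 j = c).card) <
        f (1 + ((univ.erase i).filter fun j => a 0 j = !c).card) := by
    intro i
    obtain ⟨h1, h2⟩ := hcount i
    have hle : ((univ.erase i).filter fun j => a 0 j = c).card ≤ 2 * k := by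
      have := Finset.card_filter_le (univ.erase i) (fun j => a 0 j = c)
      rw [hNe i] at this; exact this
    exact hf (by constructor <;> omega) (by constructor <;> omega) (by omega)
  have part1 : ∀ (i : Fin (2 * k + 1)) (b : Bool), b ≠ !c →
      f (1 + ((univ.erase i).filter fun j => a 0 j = b).card) <
        f (1 + ((univ.erase i).filter fun j => a 0 j = !c).card) := by
    intro i b hb
    have hbc : b = c := by cases b <;> cases c <;> simp_all
    subst hbc
    exact key i
  -- all players switch to !c at time 1
  have h1all : ∀ i, a 1 i = !c := by
    intro i
    by_contra h
    have hic : a 1 i = c := by cases h1 : a 1 i <;> cases c <;> simp_all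
    have h2 := hbr 0 i (!c)
    rw [hic] at h2
    exact absurd h2 (not_le.mpr (key i))
  -- from a constant profile everyone switches
  have hstep : ∀ (n : ℕ) (b : Bool), (∀ j, a n j = b) → ∀ i, a (n + 1) i = !b := by
    intro n b hb i
    by_contra h
    have hib : a (n + 1) i = b := by cases h1 : a (n + 1) i <;> cases b <;> simp_all
    have h2 := hbr n i (!b)
    rw [hib] at h2
    have e0 : ((univ.erase i).filter fun j => a n j = !b).card = 0 := by
      rw [Finset.card_eq_zero, Finset.filter_eq_empty_iff]
      intro j _
      rw [hb j]
      cases b <;> simp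
    have e1 : ((univ.erase i).filter fun j => a n j = b).card = 2 * k := by
      rw [Finset.filter_true_of_mem (fun j _ => hb j), hNe i]
    rw [e0, e1] at h2
    have hlt : f (2 * k + 1) < f 1 :=
      hf (by constructor <;> omega) (by constructor <;> omega) (by omega)
    have : (1 : ℕ) + 0 = 1 := rfl
    rw [this] at h2
    have : 1 + 2 * k = 2 * k + 1 := by omega
    rw [this] at h2
    linarith
  -- part (ii)
  have part2 : ∀ n : ℕ, 1 ≤ n → ∀ i, a n i = if n % 2 = 1 then !c else c := by
    intro n
    induction n with
    | zero => omega
    | succ n ih =>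
      intro _ i
      by_cases hn : 1 ≤ n
      · have hprev := ih hn
        have hstep' := hstep n _ hprev i
        rw [hstep']
        by_cases hpar : n % 2 = 1
        · have h2 : (n + 1) % 2 = 0 := by omega
          simp [hpar, h2]
        · have h2 : (n + 1) % 2 = 1 := by omega
          simp [hpar, h2]
      · have hn0 : n = 0 := by omega
        subst hn0
        simpa using h1all i
  refine ⟨part1, part2, ?_⟩
  -- part (iii)
  intro n hNE
  match n with
  | 0 =>
    have hpos : 0 < (univ.filter fun j => a 0 j = c).card := by omega
    obtain ⟨i, hi⟩ := Finset.card_pos.mp hpos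
    have hic : a 0 i = c := (Finset.mem_filter.mp hi).2
    have h := hNE i
    simp only [mgPayoff] at h
    rw [mg_card_update (a 0) i, mg_card_self (a 0) i] at h
    simp only [hic] at h
    exact absurd h (not_le.mpr (key i))
  | (n + 1) =>
    have hconst : ∀ j, a (n + 1) j = a (n + 1) (⟨0, by omega⟩ : Fin (2 * k + 1)) := by
      intro j
      rw [part2 (n + 1) (by omega) j, part2 (n + 1) (by omega) ⟨0, by omega⟩]
    set i : Fin (2 * k + 1) := ⟨0, by omega⟩ with hidef
    have h := hNE i
    simp only [mgPayoff] at h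
    rw [mg_card_update (a (n + 1)) i, mg_card_self (a (n + 1)) i] at h
    have e0 : ((univ.erase i).filter fun j => a (n + 1) j = !(a (n + 1) i)).card = 0 := by
      rw [Finset.card_eq_zero, Finset.filter_eq_empty_iff]
      intro j _
      rw [hconst j]
      cases a (n + 1) i <;> simp
    have e1 : ((univ.erase i).filter fun j => a (n + 1) j = a (n + 1) i).card = 2 * k := by
      rw [Finset.filter_true_of_mem (fun j _ => hconst j), hNe i]
    rw [e0, e1] at h
    have hlt : f (2 * k + 1) < f 1 :=
      hf (by constructor <;> omega) (by constructor <;> omega) (by omega)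
    have h10 : (1 : ℕ) + 0 = 1 := rfl
    rw [h10] at h
    have h12 : 1 + 2 * k = 2 * k + 1 := by omega
    rw [h12] at h
    linarith
end
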